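/- arXiv:2004.01737 — 8 statements merged into one kernel-verified Lean document; each statement's English description precedes it below -/
import Mathlib

section
/- Let N, M ≥ 1 be integers and 0 ≤ m ≤ M−1. Let Q ∈ ℂ^{NM×NM} be the NM-point DFT matrix, Q_m ∈ ℂ^{NM×N} its columns with indices {m+nM : 0 ≤ n ≤ N−1}, and Q̄_m ∈ ℂ^{NM×(M−1)N} the matrix of the remaining columns of Q. Let q_m ∈ ℂ^M have entries (q_m)_j = exp(−2πi·jm/M). Then (i) Q̄_m Q̄_m^H = MN·I_{NM} − N·(q_m q_m^H ⊗ I_N), and (ii) (q_m q_m^H ⊗ I_N)·Q̄_m = 0. -/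
/-! With `ζ = exp (2πi / NM)` every entry of `Q` and of `q_m` is a power of the primitive
`NM`-th root of unity `ζ`, so both identities reduce entrywise to geometric sums
`∑ᵢ ζ ^ (d * i)`, which vanish unless `NM ∣ d`.
For (i), with `a = jN + b`, `a' = j'N + b'` and `d = a' - a`, the sum over the kept columns
is the full sum `NM · [a = a']` minus the sum over the removed columns `m + nM`, which is
`ζ ^ (d m) · N · [N ∣ d]`; and `N ∣ d` means `b = b'`, in which case
`ζ ^ (d m) = q_j · conj q_j'`.
For (ii), entry `((l, b), k)` is `q_l ζ ^ (-b k) ∑ⱼ ζ ^ (N (m - k) j)`, which vanishes because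
a kept column `k` is not `≡ m (mod M)`. -/

open Matrix Kronecker Function

theorem sum_fin_pow_eq_ite {R : Type*} [DivisionRing R] [DecidableEq R] {ξ : R} {K : ℕ}
    (h : ξ ^ K = 1) :
    ∑ i : Fin K, ξ ^ (i : ℕ) = if ξ = 1 then (K : R) else 0 := by
  rw [Fin.sum_univ_eq_sum_range]
  split_ifs with hξ
  · simp [hξ]
  · rw [geom_sum_eq hξ, h, sub_self, zero_div]

theorem Fintype.sum_subtype_eq_sum_sub_sum_comp {ι α β : Type*} [Fintype ι] [Fintype α]
    [AddCommGroup β] {p : α → Prop} [DecidablePred p] {g : ι → α} (hg : Injective g)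
    (hp : ∀ k, ¬ p k ↔ k ∈ Set.range g) (f : α → β) :
    ∑ k : Subtype p, f k = ∑ k, f k - ∑ i, f (g i) := by
  rw [eq_sub_iff_add_eq, ← Fintype.sum_subtype_add_sum_subtype p f]
  congr 1
  exact Fintype.sum_equiv ((Equiv.ofInjective g hg).trans (Equiv.subtypeEquivRight hp).symm)
    _ _ fun _ => rfl

namespace IsPrimitiveRoot

theorem star_zpow {ζ : ℂ} {n : ℕ} (hζ : IsPrimitiveRoot ζ n) (hn : n ≠ 0) (a : ℤ) :
    star (ζ ^ a) = ζ ^ (-a) := by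
  rw [_root_.zpow_neg, ← _root_.inv_zpow, Complex.inv_eq_conj (hζ.norm'_eq_one hn)]
  exact map_zpow₀ (starRingEnd ℂ) ζ a

theorem sum_fin_zpow_mul {R : Type*} [Field R] [DecidableEq R] {ζ : R} {n : ℕ}
    (hζ : IsPrimitiveRoot ζ n) {K : ℕ} {d : ℤ} (hd : (n : ℤ) ∣ d * K) :
    ∑ i : Fin K, ζ ^ (d * i) = if (n : ℤ) ∣ d then (K : R) else 0 := by
  have hK : (ζ ^ d) ^ K = 1 := by
    rw [← zpow_natCast, ← _root_.zpow_mul, hζ.zpow_eq_one_iff_dvd]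
    exact hd
  simp only [_root_.zpow_mul, zpow_natCast, sum_fin_pow_eq_ite hK, hζ.zpow_eq_one_iff_dvd]

end IsPrimitiveRoot

section DFT

variable {M N m : ℕ}

def rowIndex (p : Fin M × Fin N) : ℤ := (p.1 : ℕ) * N + (p.2 : ℕ)

theorem rowIndex_eq_finProdFinEquiv (p : Fin M × Fin N) :
    rowIndex p = (finProdFinEquiv p : ℕ) := by
  simp only [rowIndex, finProdFinEquiv, Equiv.coe_fn_mk]
  push_cast
  ring

theorem dvd_rowIndex_sub_iff (p p' : Fin M × Fin N) :
    (N : ℤ) ∣ rowIndex p' - rowIndex p ↔ p.2 = p'.2 := by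
  have hsub : rowIndex p' - rowIndex p = ((p'.1 : ℤ) - p.1) * N + ((p'.2 : ℤ) - p.2) := by
    simp only [rowIndex]; ring
  rw [hsub, dvd_add_right (dvd_mul_left _ _), Fin.ext_iff]
  refine ⟨fun h => ?_, fun h => by simp [h]⟩
  have := Int.eq_zero_of_abs_lt_dvd h (by rw [abs_lt]; omega)
  omega

theorem natCast_mul_dvd_rowIndex_sub_iff (p p' : Fin M × Fin N) :
    ((N * M : ℕ) : ℤ) ∣ rowIndex p' - rowIndex p ↔ p = p' := by
  rw [rowIndex_eq_finProdFinEquiv, rowIndex_eq_finProdFinEquiv]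
  have h := (finProdFinEquiv p).isLt.trans_eq (mul_comm M N)
  have h' := (finProdFinEquiv p').isLt.trans_eq (mul_comm M N)
  constructor
  · intro hdvd
    have := Int.eq_zero_of_abs_lt_dvd hdvd (by rw [abs_lt]; push_cast; omega)
    exact finProdFinEquiv.injective (Fin.ext (by omega))
  · rintro rfl
    simp

theorem natCast_dvd_sub_iff_exists_eq_add_mul (hm : m < M) (k : Fin (N * M)) :
    (M : ℤ) ∣ m - (k : ℕ) ↔ ∃ n : Fin N, (k : ℕ) = m + n * M := by
  constructor
  · intro h
    have hmod : (k : ℕ) % M = m := by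
      rw [← Nat.mod_eq_of_lt hm]
      exact Nat.modEq_iff_dvd.mpr h
    refine ⟨⟨k / M, Nat.div_lt_of_lt_mul (k.isLt.trans_eq (mul_comm N M))⟩, ?_⟩
    have := Nat.mod_add_div' (k : ℕ) M
    simp only
    omega
  · rintro ⟨n, hn⟩
    exact ⟨-n, by rw [hn]; push_cast; ring⟩

abbrev KeptCol (N M m : ℕ) : Type :=
  {k : Fin (N * M) // ∀ n : Fin N, (k : ℕ) ≠ m + (n : ℕ) * M}

def removedCol (hm : m < M) (n : Fin N) : Fin (N * M) :=
  ⟨m + n * M, by nlinarith [n.isLt]⟩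

theorem removedCol_injective (hm : m < M) : Injective (removedCol (N := N) hm) := by
  intro n n' h
  simp only [removedCol, Fin.mk.injEq, Nat.add_left_cancel_iff] at h
  exact Fin.ext (Nat.eq_of_mul_eq_mul_right (by omega) h)

theorem sum_keptCol_zpow {ζ : ℂ} (hζ : IsPrimitiveRoot ζ (N * M)) (hm : m < M) (d : ℤ) :
    ∑ k : KeptCol N M m, ζ ^ (d * ((k : Fin (N * M)) : ℕ)) =
      (if ((N * M : ℕ) : ℤ) ∣ d then ((N * M : ℕ) : ℂ) else 0) -
        ζ ^ (d * m) * (if (N : ℤ) ∣ d then (N : ℂ) else 0) := by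
  rw [Fintype.sum_subtype_eq_sum_sub_sum_comp (removedCol_injective hm)
    (fun k => by simp [removedCol, Fin.ext_iff, eq_comm])
    (fun k : Fin (N * M) => ζ ^ (d * (k : ℕ)))]
  have hremoved (n : Fin N) :
      ζ ^ (d * (removedCol hm n : ℕ)) = ζ ^ (d * m) * ζ ^ (d * M * (n : ℕ)) := by
    rw [← zpow_add₀ (hζ.ne_zero (Nat.mul_pos n.pos (by omega)).ne')]
    simp only [removedCol]
    push_cast
    ring_nf
  have hM : (M : ℤ) ≠ 0 := by omega
  rw [Finset.sum_congr rfl fun n _ => hremoved n, ← Finset.mul_sum,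
    hζ.sum_fin_zpow_mul (dvd_mul_left _ _),
    hζ.sum_fin_zpow_mul (d := d * M) ⟨d, by push_cast; ring⟩]
  simp only [Nat.cast_mul, Int.mul_dvd_mul_iff_right hM]

theorem mul_conjTranspose_eq_of_isPrimitiveRoot {ζ : ℂ} (hζ : IsPrimitiveRoot ζ (N * M))
    (hm : m < M) {Qbar : Matrix (Fin M × Fin N) (KeptCol N M m) ℂ}
    (hQbar : ∀ p k, Qbar p k = ζ ^ (-(rowIndex p * ((k : Fin (N * M)) : ℕ))))
    {q : Fin M → ℂ} (hq : ∀ j : Fin M, q j = ζ ^ (-((j : ℕ) * m * N : ℤ))) :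
    Qbar * Qbarᴴ = ((M * N : ℕ) : ℂ) • (1 : Matrix (Fin M × Fin N) (Fin M × Fin N) ℂ) -
      (N : ℂ) • ((of fun l k : Fin M => q l * star (q k)) ⊗ₖ
        (1 : Matrix (Fin N) (Fin N) ℂ)) := by
  ext p p'
  have hNM : N * M ≠ 0 := (Nat.mul_pos p.2.pos (by omega)).ne'
  have hentry : (Qbar * Qbarᴴ) p p' =
      ∑ k : KeptCol N M m, ζ ^ ((rowIndex p' - rowIndex p) * ((k : Fin (N * M)) : ℕ)) := by
    simp only [mul_apply, conjTranspose_apply, hQbar, hζ.star_zpow hNM,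
      ← zpow_add₀ (hζ.ne_zero hNM)]
    congr! 2
    ring
  rw [hentry, sum_keptCol_zpow hζ hm]
  simp only [natCast_mul_dvd_rowIndex_sub_iff, dvd_rowIndex_sub_iff, Matrix.sub_apply,
    Matrix.smul_apply, one_apply, kroneckerMap_apply, of_apply, smul_eq_mul]
  by_cases hb : p.2 = p'.2
  · have hqq : q p.1 * star (q p'.1) = ζ ^ ((rowIndex p' - rowIndex p) * m) := by
      rw [hq, hq, hζ.star_zpow hNM, ← zpow_add₀ (hζ.ne_zero hNM)]
      simp only [rowIndex, hb]
      ring_nf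
    simp only [hb, if_true, mul_one, hqq]
    split_ifs <;> push_cast <;> ring
  · have hp : p ≠ p' := fun h => hb (h ▸ rfl)
    simp [hb, hp]

theorem kronecker_mul_eq_zero_of_isPrimitiveRoot {ζ : ℂ} (hζ : IsPrimitiveRoot ζ (N * M))
    (hm : m < M) {Qbar : Matrix (Fin M × Fin N) (KeptCol N M m) ℂ}
    (hQbar : ∀ p k, Qbar p k = ζ ^ (-(rowIndex p * ((k : Fin (N * M)) : ℕ))))
    {q : Fin M → ℂ} (hq : ∀ j : Fin M, q j = ζ ^ (-((j : ℕ) * m * N : ℤ))) :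
    ((of fun l k : Fin M => q l * star (q k)) ⊗ₖ (1 : Matrix (Fin N) (Fin N) ℂ)) *
      Qbar = 0 := by
  ext ⟨l, b⟩ ⟨⟨c, hc⟩, hk⟩
  have hNM : N * M ≠ 0 := (Nat.mul_pos b.pos (by omega)).ne'
  have hterm (j : Fin M) :
      star (q j) * Qbar (j, b) ⟨⟨c, hc⟩, hk⟩ =
        ζ ^ (-((b : ℕ) * (c : ℤ))) * ζ ^ (N * (m - c : ℤ) * (j : ℕ)) := by
    rw [hq, hQbar, hζ.star_zpow hNM, ← zpow_add₀ (hζ.ne_zero hNM),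
      ← zpow_add₀ (hζ.ne_zero hNM), rowIndex]
    ring_nf
  have hsum : ∑ j : Fin M, ζ ^ (N * (m - c : ℤ) * (j : ℕ)) = 0 := by
    rw [hζ.sum_fin_zpow_mul ⟨m - c, by push_cast; ring⟩, if_neg]
    rw [Nat.cast_mul, Int.mul_dvd_mul_iff_left (by exact_mod_cast b.pos.ne'),
      natCast_dvd_sub_iff_exists_eq_add_mul hm ⟨c, hc⟩]
    rintro ⟨n, hn⟩
    exact hk n hn
  simp only [mul_apply, Fintype.sum_prod_type, kroneckerMap_apply, of_apply, one_apply, mul_ite,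
    mul_one, mul_zero, ite_mul, zero_mul, Finset.sum_ite_eq, Finset.mem_univ, if_true,
    Matrix.zero_apply]
  simp_rw [mul_assoc, hterm, ← Finset.mul_sum, hsum, mul_zero]

end DFT

/-- Let `Q̄_m` be the `NM`-point DFT matrix with the `N` columns indexed
`{m + nM : 0 ≤ n ≤ N-1}` removed (rows indexed by pairs `(j,b) ↦ jN+b`, remaining
columns by the subtype of indices not of the form `m + nM`).  Then
(i) `Q̄_m Q̄_mᴴ = MN·I − N·(q_m q_mᴴ ⊗ I_N)` and (ii) `(q_m q_mᴴ ⊗ I_N)·Q̄_m = 0`. -/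
theorem stmt_1 (N M : ℕ) (hN : 1 ≤ N) (hM : 1 ≤ M) (m : ℕ) (hm : m ≤ M - 1)
    (Qbar : Matrix (Fin M × Fin N)
      {k : Fin (N * M) // ∀ n : Fin N, (k : ℕ) ≠ m + (n : ℕ) * M} ℂ)
    (hQbar : ∀ (j : Fin M) (b : Fin N)
        (k : {k : Fin (N * M) // ∀ n : Fin N, (k : ℕ) ≠ m + (n : ℕ) * M}),
      Qbar (j, b) k =
        Complex.exp (-(2 * (Real.pi : ℂ) * Complex.I *
          ((((j : ℕ) * N + (b : ℕ)) * ((k : Fin (N * M)) : ℕ) : ℕ) : ℂ)) / ((N * M : ℕ) : ℂ)))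
    (q : Fin M → ℂ)
    (hq : ∀ j : Fin M,
      q j = Complex.exp (-(2 * (Real.pi : ℂ) * Complex.I * (((j : ℕ) * m : ℕ) : ℂ)) / (M : ℂ))) :
    Qbar * Qbarᴴ =
        ((M * N : ℕ) : ℂ) • (1 : Matrix (Fin M × Fin N) (Fin M × Fin N) ℂ) -
          (N : ℂ) • ((Matrix.of fun l k : Fin M => q l * star (q k)) ⊗ₖ
            (1 : Matrix (Fin N) (Fin N) ℂ)) ∧
      ((Matrix.of fun l k : Fin M => q l * star (q k)) ⊗ₖ
        (1 : Matrix (Fin N) (Fin N) ℂ)) * Qbar = 0 := by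
  have hNM : N * M ≠ 0 := Nat.mul_ne_zero (by omega) (by omega)
  set ζ := Complex.exp (2 * Real.pi * Complex.I / ((N * M : ℕ) : ℂ))
  have hζ : IsPrimitiveRoot ζ (N * M) := Complex.isPrimitiveRoot_exp _ hNM
  have hm' : m < M := by omega
  have hQbar' (p : Fin M × Fin N) (k : KeptCol N M m) :
      Qbar p k = ζ ^ (-(rowIndex p * ((k : Fin (N * M)) : ℕ))) := by
    rw [hQbar, ← Complex.exp_int_mul, rowIndex]
    congr 1
    push_cast
    ring
  have hq' (j : Fin M) : q j = ζ ^ (-((j : ℕ) * m * N : ℤ)) := by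
    rw [hq, ← Complex.exp_int_mul]
    congr 1
    have hN' : (N : ℂ) ≠ 0 := by exact_mod_cast (by omega : N ≠ 0)
    push_cast
    field_simp
  exact ⟨mul_conjTranspose_eq_of_isPrimitiveRoot hζ hm' hQbar' hq',
    kronecker_mul_eq_zero_of_isPrimitiveRoot hζ hm' hQbar' hq'⟩
end

section
/- Let M ≥ 2 and N ≥ 1 be integers, α > 0 a real number, and q ∈ ℂ^M a vector all of whose entries have modulus 1. For 1 ≤ i ≤ M let I_{M,i} ∈ ℂ^{(M−1)×M} denote the identity matrix I_M with its i-th row removed, and let S̄_(i) = I_{M,i} ⊗ I_N ∈ ℂ^{(M−1)N×MN}. Then the matrix I_{(M−1)N} + α·S̄_(i)·(MN·I_{MN} − N·(qq^H ⊗ I_N))·S̄_(i)^T is invertible and its inverse equals (1/(1+NMα)) · [(I_{M−1} + (Nα/(1+Nα))·I_{M,i} qq^H I_{M,i}^T) ⊗ I_N]. -/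
open Matrix Kronecker

/-!
Let `Q = I_{M,i} q qᴴ I_{M,i}ᵀ` and `K = Q ⊗ I_N`. Since `I_{M,i}` deletes a row of the identity,
`S̄_(i) S̄_(i)ᵀ = I` and `S̄_(i) (qqᴴ ⊗ I_N) S̄_(i)ᵀ = K`, so the matrix to invert is
`(1 + αMN) I - αN K`. As `Q` is the rank-one matrix of the truncated unimodular vector,
`K² = (M - 1) K`; so both matrices lie in the commutative algebra spanned by `I` and `K`, in which
`(a I + b K)(c I + d K) = ac I + (ad + bc + bd(M - 1)) K`, and the claim reduces to two scalar
identities.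
-/

/-- The matrix `I_{M,i} ∈ ℂ^{(M-1)×M}`: the identity matrix `I_M` with its `i`-th row
removed; its row `j` is the standard basis row vector with the `1` in position `j` if
`j < i` and in position `j + 1` otherwise. -/
noncomputable def rowRemoved (M : ℕ) (i : Fin M) : Matrix (Fin (M - 1)) (Fin M) ℂ :=
  Matrix.of fun j k =>
    if (k : ℕ) = (if (j : ℕ) < (i : ℕ) then (j : ℕ) else (j : ℕ) + 1) then 1 else 0

/-- `S̄_(i) = I_{M,i} ⊗ I_N`. -/
noncomputable def sBar (M N : ℕ) (i : Fin M) :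
    Matrix (Fin (M - 1) × Fin N) (Fin M × Fin N) ℂ :=
  rowRemoved M i ⊗ₖ (1 : Matrix (Fin N) (Fin N) ℂ)

def skipEmbedding {M : ℕ} (i : Fin M) : Fin (M - 1) ↪ Fin M where
  toFun j := ⟨if (j : ℕ) < i then j else j + 1, by have := j.isLt; have := i.isLt; split <;> omega⟩
  inj' j j' h := by
    have := j.isLt
    have := j'.isLt
    simp only [Fin.mk.injEq] at h
    ext
    split_ifs at h <;> omega

lemma rowRemoved_eq_submatrix (M : ℕ) (i : Fin M) :
    rowRemoved M i = (1 : Matrix (Fin M) (Fin M) ℂ).submatrix (skipEmbedding i) id := by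
  ext j k
  simp only [rowRemoved, of_apply, submatrix_apply, id, one_apply, Fin.ext_iff, eq_comm]
  rfl

section
variable {l n α : Type*} [Fintype n] [DecidableEq n] [NonAssocSemiring α]

lemma one_submatrix_mul_mul_transpose (f : l → n) (X : Matrix n n α) :
    (1 : Matrix n n α).submatrix f id * X * ((1 : Matrix n n α).submatrix f id)ᵀ =
      X.submatrix f f := by
  ext j k
  simp [mul_apply, one_apply]

end

section
variable {m n p α : Type*} [Fintype n] [Fintype p] [DecidableEq p] [CommSemiring α]

lemma kronecker_one_mul_mul_transpose (R : Matrix m n α) (X : Matrix n n α) :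
    (R ⊗ₖ (1 : Matrix p p α)) * (X ⊗ₖ (1 : Matrix p p α)) * (R ⊗ₖ (1 : Matrix p p α))ᵀ =
      (R * X * Rᵀ) ⊗ₖ 1 := by
  rw [← kroneckerMap_transpose, transpose_one, ← mul_kronecker_mul, ← mul_kronecker_mul, one_mul,
    one_mul]

end

lemma vecMulVec_mul_self {m α : Type*} [Fintype m] [CommSemiring α] (u v : m → α) :
    vecMulVec u v * vecMulVec u v = (v ⬝ᵥ u) • vecMulVec u v := by
  rw [vecMulVec_mul_vecMulVec, vecMulVec_smul]

lemma star_dotProduct_self_of_norm_eq_one {m 𝕜 : Type*} [Fintype m] [RCLike 𝕜] {u : m → 𝕜}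
    (hu : ∀ j, ‖u j‖ = 1) : star u ⬝ᵥ u = Fintype.card m := by
  simp [dotProduct, RCLike.conj_mul, hu]

section
variable {R A : Type*} [CommRing R] [Ring A] [Algebra R A] {K : A} {μ : R}

lemma smul_one_add_smul_mul_smul_one_add_smul (hK : K * K = μ • K) (a b c d : R) :
    (a • 1 + b • K) * (c • 1 + d • K) = (a * c) • 1 + (a * d + b * c + b * d * μ) • K := by
  simp only [add_mul, mul_add, smul_mul_smul, one_mul, mul_one, hK, smul_smul]
  module

lemma smul_one_add_smul_mul_eq_one (hK : K * K = μ • K) {a b c d : R} (hac : a * c = 1)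
    (hcoeff : a * d + b * c + b * d * μ = 0) :
    (a • 1 + b • K) * (c • 1 + d • K) = 1 ∧ (c • 1 + d • K) * (a • 1 + b • K) = 1 := by
  rw [smul_one_add_smul_mul_smul_one_add_smul hK, smul_one_add_smul_mul_smul_one_add_smul hK,
    hac, mul_comm c, hac, hcoeff,
    show c * b + d * a + d * b * μ = a * d + b * c + b * d * μ by ring, hcoeff]
  simp

end

theorem stmt_2_general (M N : ℕ) (hM : 2 ≤ M) (α : ℝ) (hα : 0 < α)
    (q : Fin M → ℂ) (hq : ∀ j : Fin M, ‖q j‖ = 1) (i : Fin M)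
    (A : Matrix (Fin (M - 1) × Fin N) (Fin (M - 1) × Fin N) ℂ)
    (hA : A = 1 + (α : ℂ) •
      (sBar M N i *
        (((M * N : ℕ) : ℂ) • (1 : Matrix (Fin M × Fin N) (Fin M × Fin N) ℂ) -
          (N : ℂ) • ((Matrix.of fun l k : Fin M => q l * star (q k)) ⊗ₖ
            (1 : Matrix (Fin N) (Fin N) ℂ))) * (sBar M N i)ᵀ))
    (B : Matrix (Fin (M - 1) × Fin N) (Fin (M - 1) × Fin N) ℂ)
    (hB : B = (((1 + (N : ℝ) * (M : ℝ) * α)⁻¹ : ℝ) : ℂ) •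
      (((1 : Matrix (Fin (M - 1)) (Fin (M - 1)) ℂ) +
          ((((N : ℝ) * α / (1 + (N : ℝ) * α)) : ℝ) : ℂ) •
            (rowRemoved M i * (Matrix.of fun l k : Fin M => q l * star (q k)) *
              (rowRemoved M i)ᵀ)) ⊗ₖ (1 : Matrix (Fin N) (Fin N) ℂ))) :
    A * B = 1 ∧ B * A = 1 := by
  set f := skipEmbedding i
  set u := q ∘ f
  set K := vecMulVec u (star u) ⊗ₖ (1 : Matrix (Fin N) (Fin N) ℂ)
  have hconj (X : Matrix (Fin M) (Fin M) ℂ) :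
      sBar M N i * (X ⊗ₖ (1 : Matrix (Fin N) (Fin N) ℂ)) * (sBar M N i)ᵀ =
        X.submatrix f f ⊗ₖ 1 := by
    rw [sBar, kronecker_one_mul_mul_transpose, rowRemoved_eq_submatrix,
      one_submatrix_mul_mul_transpose]
  have hSSt : sBar M N i * (sBar M N i)ᵀ = 1 := by
    simpa [one_kronecker_one, submatrix_one _ f.injective] using hconj 1
  have hK : K * K = ((M - 1 : ℕ) : ℂ) • K := by
    rw [← mul_kronecker_mul, one_mul, vecMulVec_mul_self,
      star_dotProduct_self_of_norm_eq_one (u := u) (fun j ↦ hq (f j)), Fintype.card_fin,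
      smul_kronecker]
  have hA' : A = (1 + (α : ℂ) * ((M * N : ℕ) : ℂ)) • 1 + (-((α : ℂ) * N)) • K := by
    rw [hA, Matrix.mul_sub, Matrix.sub_mul, Matrix.mul_smul, Matrix.smul_mul, Matrix.mul_smul,
      Matrix.smul_mul, Matrix.mul_one, hSSt, hconj]
    change 1 + (α : ℂ) • (((M * N : ℕ) : ℂ) • 1 - (N : ℂ) • K) = _
    module
  set c : ℂ := (((1 + (N : ℝ) * (M : ℝ) * α)⁻¹ : ℝ) : ℂ) with hc
  set d : ℂ := ((((N : ℝ) * α / (1 + (N : ℝ) * α)) : ℝ) : ℂ) with hd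
  have hB' : B = c • 1 + (c * d) • K := by
    rw [hB, rowRemoved_eq_submatrix, one_submatrix_mul_mul_transpose, add_kronecker,
      one_kronecker_one, smul_kronecker, smul_add, smul_smul]
    rfl
  rw [hA', hB']
  apply smul_one_add_smul_mul_eq_one hK
  · have hNM : (1 + (N : ℂ) * M * α) ≠ 0 := by
      exact_mod_cast (by positivity : 1 + (N : ℝ) * M * α ≠ 0)
    push_cast [hc]
    rw [mul_inv_eq_one₀ hNM]
    ring
  · have hN : (1 + (N : ℂ) * α) ≠ 0 := by
      exact_mod_cast (by positivity : 1 + (N : ℝ) * α ≠ 0)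
    push_cast [hc, hd, Nat.cast_sub (by omega : 1 ≤ M)]
    linear_combination (1 + (N : ℂ) * M * α)⁻¹ * div_mul_cancel₀ ((N : ℂ) * α) hN

/-- For `M ≥ 2`, `N ≥ 1`, `α > 0` and a vector `q ∈ ℂ^M` of unit-modulus
entries, the matrix `I + α·S̄_(i)·(MN·I − N·(qqᴴ ⊗ I_N))·S̄_(i)ᵀ` is invertible with
inverse `(1/(1+NMα)) · [(I_{M-1} + (Nα/(1+Nα))·I_{M,i} qqᴴ I_{M,i}ᵀ) ⊗ I_N]`. -/
theorem stmt_2 (M N : ℕ) (hM : 2 ≤ M) (hN : 1 ≤ N) (α : ℝ) (hα : 0 < α)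
    (q : Fin M → ℂ) (hq : ∀ j : Fin M, ‖q j‖ = 1) (i : Fin M)
    (A : Matrix (Fin (M - 1) × Fin N) (Fin (M - 1) × Fin N) ℂ)
    (hA : A = 1 + (α : ℂ) •
      (sBar M N i *
        (((M * N : ℕ) : ℂ) • (1 : Matrix (Fin M × Fin N) (Fin M × Fin N) ℂ) -
          (N : ℂ) • ((Matrix.of fun l k : Fin M => q l * star (q k)) ⊗ₖ
            (1 : Matrix (Fin N) (Fin N) ℂ))) * (sBar M N i)ᵀ))
    (B : Matrix (Fin (M - 1) × Fin N) (Fin (M - 1) × Fin N) ℂ)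
    (hB : B = (((1 + (N : ℝ) * (M : ℝ) * α)⁻¹ : ℝ) : ℂ) •
      (((1 : Matrix (Fin (M - 1)) (Fin (M - 1)) ℂ) +
          ((((N : ℝ) * α / (1 + (N : ℝ) * α)) : ℝ) : ℂ) •
            (rowRemoved M i * (Matrix.of fun l k : Fin M => q l * star (q k)) *
              (rowRemoved M i)ᵀ)) ⊗ₖ (1 : Matrix (Fin N) (Fin N) ℂ))) :
    A * B = 1 ∧ B * A = 1 :=
  stmt_2_general M N hM α hα q hq i A hA B hB
end

section
/- Let M ≥ 2, N ≥ 1 be integers, 0 ≤ m ≤ M−1, and α > 0. Let Q̄_m ∈ ℂ^{NM×(M−1)N} be the NM-point DFT matrix with the N columns indexed {m+nM : 0 ≤ n ≤ N−1} removed, let q_m ∈ ℂ^M have entries (q_m)_j = exp(−2πi·jm/M), and set F = √α·Q̄_m. Then Σ_{i=1}^{M} S̄_(i)^T · (I_{(M−1)N} + S̄_(i) F F^H S̄_(i)^T)^{−2} · S̄_(i) = (1/(1+NMα)^2) · [((M−1+β)·I_M + β(M−2)·q_m q_m^H) ⊗ I_N], where β = (2Nα(1+Nα) + N²α²(M−1))/(1+Nα)².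 -/
open Matrix Kronecker

/-!
Deleting the `N` columns `m + nM` removes from the `NM`-point DFT, up to the phases `q`, a copy of
the `N`-point DFT, so `Q̄ Q̄ᴴ = NM·I − N·(q qᴴ ⊗ I_N)`. Hence every matrix involved has the form
`A ⊗ I_N`, and the identity reduces to one between `M × M` matrices. With
`Yᵢ = I_{M,i} q qᴴ I_{M,i}ᵀ` the matrix to be inverted is `(1 + NMα) I − Nα Yᵢ`, and
`Yᵢ² = (M − 1) Yᵢ` keeps its inverse, and the square of that, in the span of `I` and `Yᵢ`.
Summing over `i` then only needs `Dᵢ = I_{M,i}ᵀ I_{M,i} = I − eᵢeᵢᵀ`, for which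
`Σᵢ Dᵢ = (M − 1) I` and `Σᵢ Dᵢ P Dᵢ = I + (M − 2) P` when `P = q qᴴ` has unit diagonal.
-/

namespace Matrix

theorem sub_kronecker {l m n p K : Type*} [Ring K] (A A' : Matrix l m K) (B : Matrix n p K) :
    (A - A') ⊗ₖ B = A ⊗ₖ B - A' ⊗ₖ B := by
  ext
  simp [sub_mul]

theorem sum_kronecker {ι l m n p K : Type*} [Semiring K] (s : Finset ι) (A : ι → Matrix l m K)
    (B : Matrix n p K) : (∑ i ∈ s, A i) ⊗ₖ B = ∑ i ∈ s, A i ⊗ₖ B := by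
  induction s using Finset.cons_induction with
  | empty => simp
  | cons i s hi ih => simp [add_kronecker, ih]

theorem ofReal_sqrt_smul_mul_conjTranspose {m n : Type*} [Fintype n] {α : ℝ} (hα : 0 ≤ α)
    (A : Matrix m n ℂ) :
    ((Real.sqrt α : ℂ) • A) * ((Real.sqrt α : ℂ) • A)ᴴ = (α : ℂ) • (A * Aᴴ) := by
  rw [conjTranspose_smul, Matrix.smul_mul, Matrix.mul_smul, smul_smul, Complex.star_def,
    Complex.conj_ofReal, ← Complex.ofReal_mul, Real.mul_self_sqrt hα]

section MulSelfEqSmul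

variable {n K : Type*} [Fintype n] [DecidableEq n] [Field K] {X : Matrix n n K} {e : K}

theorem smul_one_add_smul_mul_self (hX : X * X = e • X) (a b : K) :
    (a • (1 : Matrix n n K) + b • X) * (a • 1 + b • X) =
      (a * a) • 1 + (b * (2 * a + b * e)) • X := by
  simp only [Matrix.mul_add, Matrix.add_mul, Matrix.smul_mul, Matrix.mul_smul, Matrix.one_mul,
    Matrix.mul_one, smul_smul, hX]
  match_scalars <;> ring

theorem inv_smul_one_sub_smul_of_mul_self (hX : X * X = e • X) {c d : K} (hc : c ≠ 0)
    (hcde : c - d * e ≠ 0) :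
    (c • (1 : Matrix n n K) - d • X)⁻¹ = c⁻¹ • 1 + (d / (c * (c - d * e))) • X := by
  refine inv_eq_right_inv ?_
  simp only [Matrix.mul_add, Matrix.sub_mul, Matrix.smul_mul, Matrix.mul_smul, Matrix.one_mul,
    Matrix.mul_one, smul_smul, hX]
  match_scalars
  · field_simp
  · field_simp
    ring

end MulSelfEqSmul

section DiagonalDeletion

variable {ι K : Type*} [Fintype ι] [DecidableEq ι] [CommRing K]

theorem sum_one_sub_single :
    ∑ i : ι, (1 - single i i (1 : K)) = (Fintype.card ι - 1 : K) • 1 := by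
  rw [Finset.sum_sub_distrib, sum_single_one, Finset.sum_const, Finset.card_univ, sub_smul,
    one_smul, Nat.cast_smul_eq_nsmul]

theorem sum_one_sub_single_mul_mul_one_sub_single (A : Matrix ι ι K) :
    ∑ i : ι, (1 - single i i (1 : K)) * A * (1 - single i i 1) =
      (Fintype.card ι - 2 : K) • A + diagonal A.diag := by
  have hexpand : ∀ i : ι, (1 - single i i (1 : K)) * A * (1 - single i i 1) =
      A - single i i 1 * A - A * single i i 1 + single i i (A.diag i) := by
    intro i
    rw [sub_mul, sub_mul, mul_sub, mul_sub, single_mul_mul_single]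
    simp only [one_mul, mul_one]
    abel
  simp only [hexpand, Finset.sum_add_distrib, Finset.sum_sub_distrib, ← Finset.sum_mul,
    ← Finset.mul_sum, sum_single_one, sum_single_eq_diagonal, Finset.sum_const, Finset.card_univ,
    one_mul, mul_one]
  rw [sub_smul, ← Nat.cast_smul_eq_nsmul K]
  module

theorem vecMulVec_mul_one_sub_single_mul_vecMulVec [StarRing K] {v : ι → K}
    (hv : ∀ j, star (v j) * v j = 1) (i : ι) :
    vecMulVec v (star v) * (1 - single i i 1) * vecMulVec v (star v) =
      (Fintype.card ι - 1 : K) • vecMulVec v (star v) := by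
  have hsq : vecMulVec v (star v) * vecMulVec v (star v) =
      (Fintype.card ι : K) • vecMulVec v (star v) := by
    rw [vecMulVec_mul_vecMulVec, vecMulVec_smul]
    congr 1
    simp [dotProduct, hv]
  have hsingle : vecMulVec v (star v) * single i i 1 * vecMulVec v (star v) =
      vecMulVec v (star v) := by
    ext k l
    simp [mul_apply, vecMulVec_apply, single_apply, ite_and]
    linear_combination (v k * star (v l)) * hv i
  rw [mul_sub, sub_mul, mul_one, hsq, hsingle, sub_smul, one_smul]

end DiagonalDeletion

end Matrix

section Compression

variable {l m K : Type*} [Fintype l] [Fintype m] [DecidableEq l]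

noncomputable def compressedInvSq [CommRing K] (R : Matrix l m K) (G : Matrix m m K) :
    Matrix m m K :=
  Rᵀ * ((1 + R * G * Rᵀ)⁻¹ * (1 + R * G * Rᵀ)⁻¹) * R

theorem compressedInvSq_kronecker_one [CommRing K] {p : Type*} [Fintype p] [DecidableEq p]
    (R : Matrix l m K) (G : Matrix m m K) :
    compressedInvSq (R ⊗ₖ (1 : Matrix p p K)) (G ⊗ₖ 1) = compressedInvSq R G ⊗ₖ 1 := by
  have hone : (1 : Matrix (l × p) (l × p) K) = 1 ⊗ₖ 1 := one_kronecker_one.symm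
  simp only [compressedInvSq, ← kroneckerMap_transpose, transpose_one, ← mul_kronecker_mul,
    Matrix.one_mul, hone, ← add_kronecker, inv_kronecker, inv_one]

theorem compressedInvSq_smul_one_sub_smul [Field K] [DecidableEq m] (R : Matrix l m K)
    (P : Matrix m m K) {a d e : K} (hR : R * Rᵀ = 1) (hP : P * (Rᵀ * R) * P = e • P)
    (ha : 1 + a ≠ 0) (hade : 1 + a - d * e ≠ 0) :
    compressedInvSq R (a • 1 - d • P) =
      ((1 + a)⁻¹ ^ 2) • (Rᵀ * R) +
        (d / ((1 + a) * (1 + a - d * e)) *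
            (2 * (1 + a)⁻¹ + d / ((1 + a) * (1 + a - d * e)) * e)) •
          (Rᵀ * R * P * (Rᵀ * R)) := by
  have hY : R * P * Rᵀ * (R * P * Rᵀ) = e • (R * P * Rᵀ) := by
    calc R * P * Rᵀ * (R * P * Rᵀ) = R * (P * (Rᵀ * R) * P) * Rᵀ := by
          simp only [Matrix.mul_assoc]
      _ = e • (R * P * Rᵀ) := by rw [hP, Matrix.mul_smul, Matrix.smul_mul]
  have hA : 1 + R * (a • 1 - d • P) * Rᵀ = (1 + a) • 1 - d • (R * P * Rᵀ) := by
    rw [Matrix.mul_sub, Matrix.sub_mul, Matrix.mul_smul, Matrix.mul_smul, Matrix.smul_mul,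
      Matrix.smul_mul, Matrix.mul_one, hR]
    module
  rw [compressedInvSq, hA, inv_smul_one_sub_smul_of_mul_self hY ha hade,
    smul_one_add_smul_mul_self hY]
  simp only [Matrix.mul_add, Matrix.add_mul, Matrix.mul_smul, Matrix.smul_mul, Matrix.mul_one,
    Matrix.mul_assoc, sq]

end Compression

theorem rowRemoved_succ_eq_submatrix (n : ℕ) (i : Fin (n + 1)) :
    rowRemoved (n + 1) i =
      (1 : Matrix (Fin (n + 1)) (Fin (n + 1)) ℂ).submatrix i.succAbove id := by
  ext j k
  rcases lt_or_ge (j : ℕ) i with h | h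
  · rw [submatrix_apply, Fin.succAbove_of_castSucc_lt _ _ (Fin.lt_def.mpr h)]
    simp [rowRemoved, h, one_apply, Fin.ext_iff, eq_comm]
  · rw [submatrix_apply, Fin.succAbove_of_le_castSucc _ _ (Fin.le_def.mpr h)]
    simp [rowRemoved, h.not_gt, one_apply, Fin.ext_iff, eq_comm]

theorem rowRemoved_mul_transpose (M : ℕ) (i : Fin M) :
    rowRemoved M i * (rowRemoved M i)ᵀ = 1 := by
  obtain ⟨n, rfl⟩ := Nat.exists_eq_add_one_of_ne_zero i.pos.ne'
  rw [rowRemoved_succ_eq_submatrix, transpose_submatrix, transpose_one,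
    ← submatrix_mul _ _ _ _ _ Function.bijective_id, Matrix.one_mul,
    submatrix_one _ Fin.succAbove_right_injective]

theorem transpose_rowRemoved_mul (M : ℕ) (i : Fin M) :
    (rowRemoved M i)ᵀ * rowRemoved M i = 1 - single i i 1 := by
  obtain ⟨n, rfl⟩ := Nat.exists_eq_add_one_of_ne_zero i.pos.ne'
  have hsum : (rowRemoved (n + 1) i)ᵀ * rowRemoved (n + 1) i =
      ∑ j : Fin n, single (i.succAbove j) (i.succAbove j) (1 : ℂ) := by
    ext k k'
    simp only [rowRemoved_succ_eq_submatrix, mul_apply, transpose_apply, submatrix_apply, id,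
      one_apply, Matrix.sum_apply, single_apply]
    refine Finset.sum_congr rfl fun j _ => ?_
    by_cases hk : i.succAbove j = k <;> by_cases hk' : i.succAbove j = k' <;> simp [hk, hk']
  have hone := sum_single_one (α := ℂ) (m := Fin (n + 1))
  rw [Fin.sum_univ_succAbove _ i] at hone
  rw [hsum, ← hone, add_sub_cancel_left]

theorem sum_smul_transpose_rowRemoved_mul_add_smul (M : ℕ) {P : Matrix (Fin M) (Fin M) ℂ}
    (hP : P.diag = fun _ => 1) (x y : ℂ) :
    ∑ i, (x • ((rowRemoved M i)ᵀ * rowRemoved M i) +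
        y • ((rowRemoved M i)ᵀ * rowRemoved M i * P * ((rowRemoved M i)ᵀ * rowRemoved M i))) =
      ((M - 1) * x + y) • 1 + ((M - 2) * y) • P := by
  simp only [transpose_rowRemoved_mul]
  rw [Finset.sum_add_distrib, ← Finset.smul_sum, ← Finset.smul_sum, sum_one_sub_single,
    sum_one_sub_single_mul_mul_one_sub_single, hP, diagonal_one, Fintype.card_fin]
  module

theorem IsPrimitiveRoot.geom_sum_zpow {K : Type*} [Field K] {ζ : K} {L : ℕ}
    (hζ : IsPrimitiveRoot ζ L) (t : ℤ) :
    ∑ k ∈ Finset.range L, (ζ ^ t) ^ k = if (L : ℤ) ∣ t then (L : K) else 0 := by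
  split_ifs with h
  · simp [(hζ.zpow_eq_one_iff_dvd t).mpr h]
  · have hne : ζ ^ t - 1 ≠ 0 := sub_ne_zero.mpr fun h1 => h ((hζ.zpow_eq_one_iff_dvd t).mp h1)
    have hL : (ζ ^ t) ^ L = 1 := by
      rw [← zpow_natCast, ← _root_.zpow_mul, mul_comm, _root_.zpow_mul, zpow_natCast,
        hζ.pow_eq_one, _root_.one_zpow]
    simpa [hL, hne] using geom_sum_mul (ζ ^ t) L

theorem Fintype.sum_subtype_eq_sum_sub_sum {α ι β : Type*} [Fintype α] [Fintype ι]
    [AddCommGroup β] (p : α → Prop) [DecidablePred p] {e : ι → α} (he : Function.Injective e)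
    (hpe : ∀ k, ¬ p k ↔ k ∈ Set.range e) (g : α → β) :
    ∑ k : {k // p k}, g k = ∑ k, g k - ∑ n, g (e n) := by
  rw [← Fintype.sum_subtype_add_sum_subtype p g, add_sub_assoc, left_eq_add, sub_eq_zero]
  refine (Fintype.sum_bijective (fun n => (⟨e n, (hpe _).mpr ⟨n, rfl⟩⟩ : {k // ¬ p k}))
    ⟨?_, ?_⟩ (fun n => g (e n)) (fun k => g k) fun _ => rfl).symm
  · exact fun n n' h => he (congrArg Subtype.val h)
  · rintro ⟨k, hk⟩
    obtain ⟨n, rfl⟩ := (hpe k).mp hk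
    exact ⟨n, rfl⟩

section DFT

open Complex Real

noncomputable def dftColumnsRemoved (M N m : ℕ) :
    Matrix (Fin M × Fin N) {k : Fin (N * M) // ∀ n : Fin N, (k : ℕ) ≠ m + (n : ℕ) * M} ℂ :=
  of fun r k =>
    cexp (-(2 * π * I * ((((r.1 : ℕ) * N + (r.2 : ℕ)) * ((k : Fin (N * M)) : ℕ) : ℕ) : ℂ)) /
      ((N * M : ℕ) : ℂ))

noncomputable def dftPhase (M m : ℕ) (j : Fin M) : ℂ :=
  cexp (-(2 * π * I * (((j : ℕ) * m : ℕ) : ℂ)) / (M : ℂ))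

theorem cexp_neg_two_pi_I_mul_div (a L : ℕ) :
    cexp (-(2 * π * I * (a : ℂ)) / (L : ℂ)) = cexp (2 * π * I / L) ^ (-(a : ℤ)) := by
  rw [← Complex.exp_int_mul]
  congr 1
  push_cast
  ring

theorem star_cexp_two_pi_I_div_zpow (L : ℕ) (z : ℤ) :
    star (cexp (2 * π * I / L) ^ z) = cexp (2 * π * I / L) ^ (-z) := by
  rw [star_zpow₀, _root_.zpow_neg, ← _root_.inv_zpow, Complex.star_def, ← Complex.exp_conj,
    ← Complex.exp_neg]
  congr 2
  simp [map_div₀, map_ofNat, conj_ofReal, conj_I]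
  ring

theorem star_dftPhase_mul_self (M m : ℕ) (j : Fin M) :
    star (dftPhase M m j) * dftPhase M m j = 1 := by
  rw [dftPhase, cexp_neg_two_pi_I_mul_div, star_cexp_two_pi_I_div_zpow,
    ← zpow_add₀ (Complex.exp_ne_zero _), neg_neg, add_neg_cancel, zpow_zero]

theorem sum_pow_subtype_ne_add_mul {R : Type*} [CommRing R] {M N m : ℕ} (hm : m < M) (x : R) :
    ∑ k : {k : Fin (N * M) // ∀ n : Fin N, (k : ℕ) ≠ m + (n : ℕ) * M}, x ^ (k : ℕ) =
      ∑ k ∈ Finset.range (N * M), x ^ k - x ^ m * ∑ n ∈ Finset.range N, (x ^ M) ^ n := by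
  have hlt : ∀ n : Fin N, m + (n : ℕ) * M < N * M := fun n => by nlinarith [n.isLt]
  let e : Fin N → Fin (N * M) := fun n => ⟨m + n * M, hlt n⟩
  have he : Function.Injective e := fun n n' h => by
    simpa [e, Fin.ext_iff, Nat.mul_right_cancel_iff (by omega : 0 < M)] using h
  have hpe : ∀ k : Fin (N * M), ¬ (∀ n : Fin N, (k : ℕ) ≠ m + n * M) ↔ k ∈ Set.range e := by
    simp [e, Fin.ext_iff, eq_comm]
  rw [Fintype.sum_subtype_eq_sum_sub_sum _ he hpe (fun k : Fin (N * M) => x ^ (k : ℕ)),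
    Fin.sum_univ_eq_sum_range (fun k => x ^ k), Finset.mul_sum,
    ← Fin.sum_univ_eq_sum_range (fun n => x ^ m * (x ^ M) ^ n)]
  simp only [e, pow_add, pow_mul']

theorem natCast_dvd_mul_add_sub_mul_add_iff {M N : ℕ} (j j' : Fin M) (b b' : Fin N) :
    (N : ℤ) ∣ ((j' * N + b' : ℕ) : ℤ) - ((j * N + b : ℕ) : ℤ) ↔ b = b' := by
  have h : ((j' * N + b' : ℕ) : ℤ) - ((j * N + b : ℕ) : ℤ) =
      N * ((j' : ℤ) - j) + ((b' : ℤ) - b) := by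
    push_cast
    ring
  rw [h, Int.dvd_add_right (dvd_mul_right _ _), Fin.ext_iff]
  constructor
  · intro hdvd
    have := Int.eq_zero_of_abs_lt_dvd hdvd (by rw [abs_lt]; omega)
    omega
  · intro hbb
    simp [hbb]

theorem natCast_mul_dvd_mul_add_sub_mul_add_iff {M N : ℕ} (hN : N ≠ 0) (j j' : Fin M)
    (b b' : Fin N) :
    ((N * M : ℕ) : ℤ) ∣ ((j' * N + b' : ℕ) : ℤ) - ((j * N + b : ℕ) : ℤ) ↔ j = j' ∧ b = b' := by
  constructor
  · intro h
    obtain rfl : b = b' := (natCast_dvd_mul_add_sub_mul_add_iff j j' b b').mp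
      (dvd_trans ⟨M, by push_cast; ring⟩ h)
    have ht : ((j' * N + b : ℕ) : ℤ) - ((j * N + b : ℕ) : ℤ) = N * ((j' : ℤ) - j) := by
      push_cast
      ring
    rw [ht, Nat.cast_mul, mul_dvd_mul_iff_left (by exact_mod_cast hN)] at h
    have := Int.eq_zero_of_abs_lt_dvd h (by rw [abs_lt]; omega)
    exact ⟨Fin.ext (by omega), rfl⟩
  · rintro ⟨rfl, rfl⟩
    simp

theorem dftColumnsRemoved_mul_star_apply {M N m : ℕ} (j j' : Fin M) (b b' : Fin N)
    (k : {k : Fin (N * M) // ∀ n : Fin N, (k : ℕ) ≠ m + (n : ℕ) * M}) :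
    dftColumnsRemoved M N m (j, b) k * star (dftColumnsRemoved M N m (j', b') k) =
      (cexp (2 * π * I / ((N * M : ℕ) : ℂ)) ^
        (((j' * N + b' : ℕ) : ℤ) - ((j * N + b : ℕ) : ℤ))) ^ ((k : Fin (N * M)) : ℕ) := by
  rw [dftColumnsRemoved, of_apply, of_apply, cexp_neg_two_pi_I_mul_div, cexp_neg_two_pi_I_mul_div,
    star_cexp_two_pi_I_div_zpow, ← zpow_add₀ (Complex.exp_ne_zero _), ← zpow_natCast,
    ← _root_.zpow_mul]
  congr 1
  push_cast
  ring

theorem dftColumnsRemoved_mul_conjTranspose {M N m : ℕ} (hN : N ≠ 0) (hm : m < M) :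
    dftColumnsRemoved M N m * (dftColumnsRemoved M N m)ᴴ =
      ((N * M : ℕ) : ℂ) • 1 -
        (N : ℂ) • (vecMulVec (dftPhase M m) (star (dftPhase M m)) ⊗ₖ 1) := by
  ext ⟨j, b⟩ ⟨j', b'⟩
  simp only [mul_apply, conjTranspose_apply, dftColumnsRemoved_mul_star_apply]
  have hdivN := natCast_dvd_mul_add_sub_mul_add_iff j j' b b'
  have hdivNM := natCast_mul_dvd_mul_add_sub_mul_add_iff hN j j' b b'
  have hNM : N * M ≠ 0 := mul_ne_zero hN (by omega)
  set ω := cexp (2 * π * I / ((N * M : ℕ) : ℂ))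
  set t : ℤ := ((j' * N + b' : ℕ) : ℤ) - ((j * N + b : ℕ) : ℤ) with ht
  have hω0 : ω ≠ 0 := Complex.exp_ne_zero _
  have hωprim : IsPrimitiveRoot ω (N * M) := isPrimitiveRoot_exp _ hNM
  have hωM : IsPrimitiveRoot (ω ^ M) N := hωprim.pow (Nat.pos_of_ne_zero hNM) (mul_comm _ _)
  have hcomm : (ω ^ t) ^ M = (ω ^ M) ^ t := by
    rw [← zpow_natCast, ← _root_.zpow_mul, mul_comm, _root_.zpow_mul, zpow_natCast]
  have hphase : b = b' → (ω ^ t) ^ m = dftPhase M m j * star (dftPhase M m j') := by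
    rintro rfl
    have hωN : ω ^ N = cexp (2 * π * I / M) := by
      rw [← Complex.exp_nat_mul]
      congr 1
      push_cast
      field_simp
    rw [dftPhase, dftPhase, cexp_neg_two_pi_I_mul_div, cexp_neg_two_pi_I_mul_div,
      star_cexp_two_pi_I_div_zpow, ← hωN]
    simp only [← zpow_natCast, ← _root_.zpow_mul, ← zpow_add₀ hω0]
    congr 1
    rw [ht]
    push_cast
    ring
  rw [sum_pow_subtype_ne_add_mul hm, hcomm, hωprim.geom_sum_zpow, hωM.geom_sum_zpow]
  simp only [hdivNM, hdivN, Matrix.sub_apply, Matrix.smul_apply, one_apply, kroneckerMap_apply,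
    vecMulVec_apply, Prod.mk.injEq, smul_eq_mul]
  by_cases hb : b = b'
  · subst hb
    rw [hphase rfl]
    by_cases hj : j = j' <;> simp [hj, mul_comm]
  · simp [hb]

end DFT

/-- With `F = √α·Q̄_m` (`Q̄_m` the `NM`-point DFT matrix with the `N`
columns indexed `m + nM` removed), one has
`Σ_{i=1}^{M} S̄_(i)ᵀ (I + S̄_(i) F Fᴴ S̄_(i)ᵀ)⁻² S̄_(i)
  = (1/(1+NMα)²)·[((M−1+β)·I_M + β(M−2)·q_m q_mᴴ) ⊗ I_N]`,
where `β = (2Nα(1+Nα) + N²α²(M−1))/(1+Nα)²`. -/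
theorem stmt_4 (M N : ℕ) (hM : 2 ≤ M) (hN : 1 ≤ N) (m : ℕ) (hm : m ≤ M - 1)
    (α : ℝ) (hα : 0 < α)
    (Qbar : Matrix (Fin M × Fin N)
      {k : Fin (N * M) // ∀ n : Fin N, (k : ℕ) ≠ m + (n : ℕ) * M} ℂ)
    (hQbar : ∀ (j : Fin M) (b : Fin N)
        (k : {k : Fin (N * M) // ∀ n : Fin N, (k : ℕ) ≠ m + (n : ℕ) * M}),
      Qbar (j, b) k =
        Complex.exp (-(2 * (Real.pi : ℂ) * Complex.I *
          ((((j : ℕ) * N + (b : ℕ)) * ((k : Fin (N * M)) : ℕ) : ℕ) : ℂ)) / ((N * M : ℕ) : ℂ)))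
    (q : Fin M → ℂ)
    (hq : ∀ j : Fin M,
      q j = Complex.exp (-(2 * (Real.pi : ℂ) * Complex.I * (((j : ℕ) * m : ℕ) : ℂ)) / (M : ℂ)))
    (F : Matrix (Fin M × Fin N)
      {k : Fin (N * M) // ∀ n : Fin N, (k : ℕ) ≠ m + (n : ℕ) * M} ℂ)
    (hF : F = ((Real.sqrt α : ℝ) : ℂ) • Qbar)
    (β : ℝ)
    (hβ : β = (2 * N * α * (1 + N * α) + (N : ℝ) ^ 2 * α ^ 2 * ((M : ℝ) - 1)) /
      (1 + (N : ℝ) * α) ^ 2) :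
    (∑ i : Fin M,
        (sBar M N i)ᵀ *
          (((1 : Matrix (Fin (M - 1) × Fin N) (Fin (M - 1) × Fin N) ℂ) +
              sBar M N i * F * Fᴴ * (sBar M N i)ᵀ)⁻¹ *
            ((1 : Matrix (Fin (M - 1) × Fin N) (Fin (M - 1) × Fin N) ℂ) +
              sBar M N i * F * Fᴴ * (sBar M N i)ᵀ)⁻¹) * sBar M N i) =
      ((((1 + (N : ℝ) * (M : ℝ) * α) ^ 2)⁻¹ : ℝ) : ℂ) •
        (((((M : ℝ) - 1 + β : ℝ) : ℂ) • (1 : Matrix (Fin M) (Fin M) ℂ) +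
            ((β * ((M : ℝ) - 2) : ℝ) : ℂ) •
              (Matrix.of fun l k : Fin M => q l * star (q k))) ⊗ₖ
          (1 : Matrix (Fin N) (Fin N) ℂ)) := by
  obtain rfl : Qbar = dftColumnsRemoved M N m := by
    ext ⟨j, b⟩ k
    exact hQbar j b k
  obtain rfl : q = dftPhase M m := funext hq
  set P := vecMulVec (dftPhase M m) (star (dftPhase M m))
  have hFF : F * Fᴴ =
      ((α * (N * M : ℕ) : ℂ) • 1 - (α * N : ℂ) • P) ⊗ₖ (1 : Matrix (Fin N) (Fin N) ℂ) := by
    rw [hF, ofReal_sqrt_smul_mul_conjTranspose hα.le,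
      dftColumnsRemoved_mul_conjTranspose (by omega) (by omega), smul_sub, smul_smul, smul_smul,
      sub_kronecker, smul_kronecker, smul_kronecker, one_kronecker_one]
  have hP : ∀ i, P * ((rowRemoved M i)ᵀ * rowRemoved M i) * P = ((M : ℂ) - 1) • P := fun i => by
    rw [transpose_rowRemoved_mul, vecMulVec_mul_one_sub_single_mul_vecMulVec
      (star_dftPhase_mul_self M m), Fintype.card_fin]
  have hdiag : P.diag = fun _ => 1 :=
    funext fun j => (mul_comm _ _).trans (star_dftPhase_mul_self M m j)
  have hc : (1 : ℂ) + α * (N * M : ℕ) ≠ 0 := by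
    exact_mod_cast (by positivity : (0 : ℝ) < 1 + α * (N * M : ℕ)).ne'
  have hcd : (1 : ℂ) + α * (N * M : ℕ) - α * N * (M - 1) = 1 + α * N := by
    push_cast
    ring
  have hαN : (1 : ℂ) + α * N ≠ 0 := by
    exact_mod_cast (by positivity : (0 : ℝ) < 1 + α * N).ne'
  rw [Finset.sum_congr rfl fun i _ => show _ = compressedInvSq (rowRemoved M i) _ ⊗ₖ 1 by
    rw [Matrix.mul_assoc (sBar M N i) F, hFF]
    exact compressedInvSq_kronecker_one _ _, ← sum_kronecker, ← smul_kronecker]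
  congr 1
  simp_rw [compressedInvSq_smul_one_sub_smul _ _ (rowRemoved_mul_transpose M _) (hP _) hc
    (hcd ▸ hαN)]
  rw [sum_smul_transpose_rowRemoved_mul_add_smul M hdiag, hcd]
  change _ = _ • (_ • 1 + _ • P)
  subst hβ
  match_scalars <;> field_simp
end

section
/- Let σ_1, σ_2, λ_1, λ_2, c_1, c_2 > 0 be real numbers. Define θ_1 = (σ_2² + λ_1λ_2 c_1)², θ_2 = (σ_1² + λ_1λ_2 c_2)², and ϑ = (σ_1²σ_2² + σ_1²λ_1λ_2 c_1 + σ_2²λ_1λ_2 c_2)². Then the symmetric 2×2 matrix H with entries H_{11} = λ_1²λ_2²(ϑ − σ_1⁴θ_1)/(θ_1 ϑ), H_{22} = λ_1²λ_2²(ϑ − σ_2⁴θ_2)/(θ_2 ϑ), and H_{12} = H_{21} = −σ_1²σ_2²λ_1²λ_2²/ϑ is positive semidefinite if and only if c_1 c_2 ≥ σ_1²σ_2²/(2 λ_1² λ_2²). -/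
/-!
A real symmetric `2 × 2` matrix with positive `(1,1)` entry is positive semidefinite exactly when
its determinant is nonnegative. Here `H₁₁ > 0` because `ϑ` and `σ₁⁴θ₁` are squares of positive
numbers differing by `σ₂²λ₁λ₂c₂`, and the determinant factors as
`det H = λ₁⁴λ₂⁴σ₁²σ₂² (2λ₁²λ₂²c₁c₂ - σ₁²σ₂²) / (θ₁θ₂ϑ)`.
-/

open Matrix

theorem Matrix.posSemidef_fin_two_iff_of_pos {a b d : ℝ} (ha : 0 < a) :
    (!![a, b; b, d]).PosSemidef ↔ b ^ 2 ≤ a * d := by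
  have hquad : ∀ x : Fin 2 → ℝ, a * (star x ⬝ᵥ (!![a, b; b, d] *ᵥ x)) =
      (a * x 0 + b * x 1) ^ 2 + (a * d - b ^ 2) * x 1 ^ 2 := by
    intro x
    simp only [star_trivial, dotProduct, mulVec, Fin.sum_univ_two, cons_val', cons_val_zero,
      cons_val_one, empty_val', cons_val_fin_one, of_apply]
    ring
  rw [posSemidef_iff_dotProduct_mulVec, ← sub_nonneg]
  constructor
  · rintro ⟨-, hnonneg⟩
    refine nonneg_of_mul_nonneg_left (b := a ^ 2) ?_ (by positivity)
    calc 0 ≤ a * (star ![-b, a] ⬝ᵥ (!![a, b; b, d] *ᵥ ![-b, a])) :=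
          mul_nonneg ha.le (hnonneg _)
      _ = (a * d - b ^ 2) * a ^ 2 := by
        rw [hquad]; simp only [cons_val_zero, cons_val_one, cons_val_fin_one]; ring
  · intro hdet
    refine ⟨by ext i j; fin_cases i <;> fin_cases j <;> rfl, fun x => ?_⟩
    refine nonneg_of_mul_nonneg_right (a := a) ?_ ha
    rw [hquad]
    positivity

/-- positivity of the Hessian of `−f_{l,k}`.  With
`θ_1 = (σ_2² + λ_1λ_2 c_1)²`, `θ_2 = (σ_1² + λ_1λ_2 c_2)²` and
`ϑ = (σ_1²σ_2² + σ_1²λ_1λ_2 c_1 + σ_2²λ_1λ_2 c_2)²`, the symmetric `2×2` matrix `H`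
with `H_11 = λ_1²λ_2²(ϑ − σ_1⁴θ_1)/(θ_1ϑ)`, `H_22 = λ_1²λ_2²(ϑ − σ_2⁴θ_2)/(θ_2ϑ)` and
`H_12 = H_21 = −σ_1²σ_2²λ_1²λ_2²/ϑ` is positive semidefinite iff
`c_1 c_2 ≥ σ_1²σ_2²/(2λ_1²λ_2²)`. -/
theorem stmt_9 (σ1 σ2 l1 l2 c1 c2 : ℝ)
    (hσ1 : 0 < σ1) (hσ2 : 0 < σ2) (hl1 : 0 < l1) (hl2 : 0 < l2)
    (hc1 : 0 < c1) (hc2 : 0 < c2)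
    (θ1 θ2 ϑ : ℝ)
    (hθ1 : θ1 = (σ2 ^ 2 + l1 * l2 * c1) ^ 2)
    (hθ2 : θ2 = (σ1 ^ 2 + l1 * l2 * c2) ^ 2)
    (hϑ : ϑ = (σ1 ^ 2 * σ2 ^ 2 + σ1 ^ 2 * l1 * l2 * c1 + σ2 ^ 2 * l1 * l2 * c2) ^ 2)
    (H : Matrix (Fin 2) (Fin 2) ℝ)
    (hH : H = !![l1 ^ 2 * l2 ^ 2 * (ϑ - σ1 ^ 4 * θ1) / (θ1 * ϑ),
                 -(σ1 ^ 2 * σ2 ^ 2 * l1 ^ 2 * l2 ^ 2) / ϑ;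
                 -(σ1 ^ 2 * σ2 ^ 2 * l1 ^ 2 * l2 ^ 2) / ϑ,
                 l1 ^ 2 * l2 ^ 2 * (ϑ - σ2 ^ 4 * θ2) / (θ2 * ϑ)]) :
    H.PosSemidef ↔ σ1 ^ 2 * σ2 ^ 2 / (2 * l1 ^ 2 * l2 ^ 2) ≤ c1 * c2 := by
  have hθ1_pos : 0 < θ1 := hθ1 ▸ by positivity
  have hθ2_pos : 0 < θ2 := hθ2 ▸ by positivity
  have hϑ_pos : 0 < ϑ := hϑ ▸ by positivity
  have hH11 : 0 < l1 ^ 2 * l2 ^ 2 * (ϑ - σ1 ^ 4 * θ1) / (θ1 * ϑ) := by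
    have hdiff : ϑ - σ1 ^ 4 * θ1 = σ2 ^ 2 * l1 * l2 * c2 *
        (σ1 ^ 2 * σ2 ^ 2 + σ1 ^ 2 * l1 * l2 * c1 + σ2 ^ 2 * l1 * l2 * c2
          + σ1 ^ 2 * (σ2 ^ 2 + l1 * l2 * c1)) := by
      rw [hϑ, hθ1]; ring
    rw [hdiff]; positivity
  have hdet : l1 ^ 2 * l2 ^ 2 * (ϑ - σ1 ^ 4 * θ1) / (θ1 * ϑ) *
        (l1 ^ 2 * l2 ^ 2 * (ϑ - σ2 ^ 4 * θ2) / (θ2 * ϑ))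
        - (-(σ1 ^ 2 * σ2 ^ 2 * l1 ^ 2 * l2 ^ 2) / ϑ) ^ 2
      = l1 ^ 4 * l2 ^ 4 * σ1 ^ 2 * σ2 ^ 2 / (θ1 * θ2 * ϑ) *
        (2 * l1 ^ 2 * l2 ^ 2 * (c1 * c2) - σ1 ^ 2 * σ2 ^ 2) := by
    field_simp
    subst hθ1 hθ2 hϑ
    ring
  rw [hH, posSemidef_fin_two_iff_of_pos hH11, ← sub_nonneg, hdet,
    mul_nonneg_iff_of_pos_left (by positivity), div_le_iff₀ (by positivity), sub_nonneg,
    mul_comm (c1 * c2)]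
end

section
/- Let σ_1, σ_2 > 0, let λ̃_{1,1} ≥ λ̃_{1,2} ≥ … ≥ λ̃_{1,N_1} > 0 and λ̃_{2,1},…,λ̃_{2,N_2} > 0, and let c_{2,1},…,c_{2,N_2} > 0. For x > 0 define f'_{l,k}(x) = σ_2² λ̃_{1,l}² λ̃_{2,k}² c_{2,k} / [ (σ_2² + λ̃_{1,l}λ̃_{2,k} x)(σ_1²σ_2² + σ_1²λ̃_{1,l}λ̃_{2,k} x + σ_2²λ̃_{1,l}λ̃_{2,k} c_{2,k}) ]. Suppose c*_{1,1},…,c*_{1,N_1} > 0 and μ > 0 satisfy Σ_{k=1}^{N_2} f'_{l,k}(c*_{1,l}) = μ·ln 2 for every l = 1,…,N_1. Then c*_{1,l} ≥ c*_{1,l+1} for all 1 ≤ l ≤ N_1 − 1; that is, the stationary power allocation is in descending order whenever the channel eigenvalues λ̃_{1,l} are in descending order. -/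
/-!
Dividing numerator and denominator by `a²` shows that the `(l, k)` term of the stationarity
condition is increasing in the eigenvalue `a = λ̃_{1,l}` and strictly decreasing in the power
`x = c_{1,l}`. If `c_{1,l} < c_{1,l+1}` while `λ̃_{1,l+1} ≤ λ̃_{1,l}`, every term for `l + 1` is
then strictly smaller than the corresponding term for `l`, so the two sums cannot both equal
`μ ln 2`; the sums are nonempty because `μ ln 2 > 0`.
-/

/-- `streamGain σ1 σ2 λ̃_{2,k} c_{2,k} λ̃_{1,l} x` is the paper's `f'_{l,k}(x)`. -/
noncomputable def streamGain (σ1 σ2 lam c a x : ℝ) : ℝ :=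
  σ2 ^ 2 * a ^ 2 * lam ^ 2 * c /
    ((σ2 ^ 2 + a * lam * x) * (σ1 ^ 2 * σ2 ^ 2 + σ1 ^ 2 * a * lam * x + σ2 ^ 2 * a * lam * c))

section streamGain

variable {σ1 σ2 lam c a x : ℝ}

lemma streamGain_eq_div (ha : 0 < a) :
    streamGain σ1 σ2 lam c a x =
      σ2 ^ 2 * lam ^ 2 * c /
        ((σ2 ^ 2 / a + lam * x) * (σ1 ^ 2 * σ2 ^ 2 / a + σ1 ^ 2 * lam * x + σ2 ^ 2 * lam * c)) := by
  have hden : (σ2 ^ 2 + a * lam * x) *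
        (σ1 ^ 2 * σ2 ^ 2 + σ1 ^ 2 * a * lam * x + σ2 ^ 2 * a * lam * c) =
      a ^ 2 * ((σ2 ^ 2 / a + lam * x) *
        (σ1 ^ 2 * σ2 ^ 2 / a + σ1 ^ 2 * lam * x + σ2 ^ 2 * lam * c)) := by
    field_simp
  rw [streamGain, hden, show σ2 ^ 2 * a ^ 2 * lam ^ 2 * c = a ^ 2 * (σ2 ^ 2 * lam ^ 2 * c) by ring,
    mul_div_mul_left _ _ (by positivity)]

lemma streamGain_lt_of_lt (hσ2 : 0 < σ2) (hlam : 0 < lam) (hc : 0 < c) (ha : 0 < a)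
    (hx : 0 < x) {x' : ℝ} (hxx' : x < x') :
    streamGain σ1 σ2 lam c a x' < streamGain σ1 σ2 lam c a x := by
  have hx' : 0 < x' := hx.trans hxx'
  rw [streamGain_eq_div ha, streamGain_eq_div ha]
  apply div_lt_div_of_pos_left (by positivity) (by positivity)
  exact mul_lt_mul (by gcongr) (by gcongr) (by positivity) (by positivity)

lemma streamGain_le_of_le (hσ2 : 0 < σ2) (hlam : 0 < lam) (hc : 0 < c) (hx : 0 < x)
    (ha : 0 < a) {A : ℝ} (haA : a ≤ A) :
    streamGain σ1 σ2 lam c a x ≤ streamGain σ1 σ2 lam c A x := by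
  have hA : 0 < A := ha.trans_le haA
  rw [streamGain_eq_div ha, streamGain_eq_div hA]
  apply div_le_div_of_nonneg_left (by positivity) (by positivity)
  gcongr

end streamGain

theorem stmt_10_general (N1 N2 : ℕ) (σ1 σ2 : ℝ) (hσ2 : 0 < σ2)
    (lt1 : Fin N1 → ℝ) (hlt1pos : ∀ l, 0 < lt1 l) (hlt1 : Antitone lt1)
    (lt2 : Fin N2 → ℝ) (hlt2pos : ∀ k, 0 < lt2 k)
    (c2 : Fin N2 → ℝ) (hc2 : ∀ k, 0 < c2 k)
    (c1 : Fin N1 → ℝ) (hc1 : ∀ l, 0 < c1 l)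
    (μ : ℝ) (hμ : 0 < μ)
    (hstat : ∀ l : Fin N1,
      (∑ k : Fin N2,
        σ2 ^ 2 * (lt1 l) ^ 2 * (lt2 k) ^ 2 * c2 k /
          ((σ2 ^ 2 + lt1 l * lt2 k * c1 l) *
            (σ1 ^ 2 * σ2 ^ 2 + σ1 ^ 2 * lt1 l * lt2 k * c1 l +
              σ2 ^ 2 * lt1 l * lt2 k * c2 k))) = μ * Real.log 2) :
    ∀ (l : ℕ) (hl : l + 1 < N1), c1 ⟨l + 1, hl⟩ ≤ c1 ⟨l, Nat.lt_of_succ_lt hl⟩ := by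
  intro l hl
  set l0 : Fin N1 := ⟨l, Nat.lt_of_succ_lt hl⟩
  set l1 : Fin N1 := ⟨l + 1, hl⟩
  by_contra! hcon
  have hlt1_le : lt1 l1 ≤ lt1 l0 := hlt1 (Fin.mk_le_mk.mpr l.le_succ)
  have hN2 : (Finset.univ : Finset (Fin N2)).Nonempty := by
    by_contra hempty
    have h := hstat l0
    rw [Finset.not_nonempty_iff_eq_empty.mp hempty, Finset.sum_empty] at h
    exact (mul_pos hμ (Real.log_pos one_lt_two)).ne h
  have hsum : ∑ k, streamGain σ1 σ2 (lt2 k) (c2 k) (lt1 l1) (c1 l1) <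
      ∑ k, streamGain σ1 σ2 (lt2 k) (c2 k) (lt1 l0) (c1 l0) :=
    Finset.sum_lt_sum_of_nonempty hN2 fun k _ =>
      (streamGain_lt_of_lt hσ2 (hlt2pos k) (hc2 k) (hlt1pos l1) (hc1 l0) hcon).trans_le
        (streamGain_le_of_le hσ2 (hlt2pos k) (hc2 k) (hc1 l0) (hlt1pos l1) hlt1_le)
  exact hsum.ne ((hstat l1).trans (hstat l0).symm)

/-- if the stationary (KKT) conditions
`Σ_k f'_{l,k}(c*_{1,l}) = μ·ln 2` hold for every `l`, with channel eigenvalues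
`λ̃_{1,l}` in descending order, then the stationary power allocation `c*_{1,l}` is in
descending order: `c*_{1,l+1} ≤ c*_{1,l}`. -/
theorem stmt_10 (N1 N2 : ℕ) (σ1 σ2 : ℝ) (hσ1 : 0 < σ1) (hσ2 : 0 < σ2)
    (lt1 : Fin N1 → ℝ) (hlt1pos : ∀ l, 0 < lt1 l) (hlt1 : Antitone lt1)
    (lt2 : Fin N2 → ℝ) (hlt2pos : ∀ k, 0 < lt2 k)
    (c2 : Fin N2 → ℝ) (hc2 : ∀ k, 0 < c2 k)
    (c1 : Fin N1 → ℝ) (hc1 : ∀ l, 0 < c1 l)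
    (μ : ℝ) (hμ : 0 < μ)
    (hstat : ∀ l : Fin N1,
      (∑ k : Fin N2,
        σ2 ^ 2 * (lt1 l) ^ 2 * (lt2 k) ^ 2 * c2 k /
          ((σ2 ^ 2 + lt1 l * lt2 k * c1 l) *
            (σ1 ^ 2 * σ2 ^ 2 + σ1 ^ 2 * lt1 l * lt2 k * c1 l +
              σ2 ^ 2 * lt1 l * lt2 k * c2 k))) = μ * Real.log 2) :
    ∀ (l : ℕ) (hl : l + 1 < N1), c1 ⟨l + 1, hl⟩ ≤ c1 ⟨l, Nat.lt_of_succ_lt hl⟩ :=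
  stmt_10_general N1 N2 σ1 σ2 hσ2 lt1 hlt1pos hlt1 lt2 hlt2pos c2 hc2 c1 hc1 μ hμ hstat
end

section
/- (High-power part of Theorem 4: uniform power allocation is optimal.) Let σ_1, σ_2 > 0, integers N_1, N_2 ≥ 1, S > 0, and positive reals c_{2,1},…,c_{2,N_2}. Then for all positive reals c_{1,1},…,c_{1,N_1} with Σ_{l=1}^{N_1} c_{1,l} = S, one has Σ_{k=1}^{N_2} Σ_{l=1}^{N_1} log( c_{1,l}·c_{2,k} / (σ_1² c_{1,l} + σ_2² c_{2,k}) ) ≤ Σ_{k=1}^{N_2} Σ_{l=1}^{N_1} log( (S/N_1)·c_{2,k} / (σ_1²·(S/N_1) + σ_2² c_{2,k}) ); i.e., the function φ_1 is maximized over the simplex by the uniform allocation c_{1,l} = S/N_1. -/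
/-!
For fixed `a ≥ 0`, `b, c > 0` the map `h x = log (x * c / (a * x + b))` is concave on `(0, ∞)`,
so a sum `∑ h (x i)` with prescribed total `∑ x i` is largest when all `x i` equal their mean `m`.
Concretely, `h` lies below its tangent line at `m`, and the linear parts of the tangent bounds
cancel after summation because `∑ (x i - m) = 0`.
-/

open Real Finset

lemma log_mul_div_add_le_tangent {a b c x m : ℝ} (ha : 0 ≤ a) (hb : 0 < b) (hc : 0 < c)
    (hx : 0 < x) (hm : 0 < m) :
    log (x * c / (a * x + b)) ≤
      log (m * c / (a * m + b)) + b / (m * (a * m + b)) * (x - m) := by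
  have hax : 0 < a * x + b := by positivity
  have ham : 0 < a * m + b := by positivity
  have hquot : log (x * c / (a * x + b)) - log (m * c / (a * m + b)) =
      log (x * (a * m + b) / (m * (a * x + b))) := by
    rw [← log_div (by positivity) (by positivity)]
    congr 1
    field_simp
  have hlog := log_le_sub_one_of_pos (show 0 < x * (a * m + b) / (m * (a * x + b)) by positivity)
  -- The gap to the tangent is `a b (x - m)² / (m (a x + b) (a m + b)) ≥ 0`.
  have hgap : x * (a * m + b) / (m * (a * x + b)) - 1 ≤ b / (m * (a * m + b)) * (x - m) := by
    rw [div_sub_one (by positivity), div_mul_eq_mul_div, div_le_div_iff₀ (by positivity)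
      (by positivity)]
    nlinarith [mul_nonneg (mul_nonneg (mul_nonneg ha hb.le) hm.le) (sq_nonneg (x - m))]
  linarith

lemma sum_log_mul_div_add_le_card_mul {ι : Type*} (s : Finset ι) {a b c : ℝ} (ha : 0 ≤ a)
    (hb : 0 < b) (hc : 0 < c) {x : ι → ℝ} (hx : ∀ i ∈ s, 0 < x i) :
    ∑ i ∈ s, log (x i * c / (a * x i + b)) ≤
      #s * log ((∑ i ∈ s, x i) / #s * c / (a * ((∑ i ∈ s, x i) / #s) + b)) := by
  rcases s.eq_empty_or_nonempty with rfl | hs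
  · simp
  set m := (∑ i ∈ s, x i) / #s with hm_def
  have hcard : (0 : ℝ) < #s := by exact_mod_cast hs.card_pos
  have hm : 0 < m := div_pos (sum_pos hx hs) hcard
  have hmean : ∑ i ∈ s, (x i - m) = 0 := by
    rw [sum_sub_distrib, sum_const, nsmul_eq_mul, hm_def, mul_div_cancel₀ _ hcard.ne', sub_self]
  calc ∑ i ∈ s, log (x i * c / (a * x i + b))
      ≤ ∑ i ∈ s, (log (m * c / (a * m + b)) + b / (m * (a * m + b)) * (x i - m)) :=
        sum_le_sum fun i hi => log_mul_div_add_le_tangent ha hb hc (hx i hi) hm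
    _ = #s * log (m * c / (a * m + b)) := by
        rw [sum_add_distrib, ← mul_sum, hmean, sum_const, nsmul_eq_mul]
        ring

theorem stmt_11_general (N1 N2 : ℕ)
    (σ1 σ2 : ℝ) (hσ2 : 0 < σ2)
    (S : ℝ)
    (c2 : Fin N2 → ℝ) (hc2 : ∀ k, 0 < c2 k)
    (c1 : Fin N1 → ℝ) (hc1 : ∀ l, 0 < c1 l) (hsum : ∑ l : Fin N1, c1 l = S) :
    (∑ k : Fin N2, ∑ l : Fin N1,
        Real.log (c1 l * c2 k / (σ1 ^ 2 * c1 l + σ2 ^ 2 * c2 k))) ≤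
      ∑ k : Fin N2, ∑ l : Fin N1,
        Real.log ((S / N1) * c2 k / (σ1 ^ 2 * (S / N1) + σ2 ^ 2 * c2 k)) := by
  refine sum_le_sum fun k _ => ?_
  have h := sum_log_mul_div_add_le_card_mul univ (sq_nonneg σ1)
    (mul_pos (pow_pos hσ2 2) (hc2 k)) (hc2 k) (fun l _ => hc1 l)
  rw [hsum, card_univ, Fintype.card_fin] at h
  rwa [sum_const, card_univ, Fintype.card_fin, nsmul_eq_mul]

/-- high-power part of Theorem 4: the function
`φ_1(c_1) = Σ_k Σ_l log(c_{1,l} c_{2,k} / (σ_1² c_{1,l} + σ_2² c_{2,k}))`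
is maximized over the simplex `{c_1 > 0 : Σ_l c_{1,l} = S}` by the uniform allocation
`c_{1,l} = S/N_1`. -/
theorem stmt_11 (N1 N2 : ℕ) (hN1 : 1 ≤ N1) (hN2 : 1 ≤ N2)
    (σ1 σ2 : ℝ) (hσ1 : 0 < σ1) (hσ2 : 0 < σ2)
    (S : ℝ) (hS : 0 < S)
    (c2 : Fin N2 → ℝ) (hc2 : ∀ k, 0 < c2 k)
    (c1 : Fin N1 → ℝ) (hc1 : ∀ l, 0 < c1 l) (hsum : ∑ l : Fin N1, c1 l = S) :
    (∑ k : Fin N2, ∑ l : Fin N1,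
        Real.log (c1 l * c2 k / (σ1 ^ 2 * c1 l + σ2 ^ 2 * c2 k))) ≤
      ∑ k : Fin N2, ∑ l : Fin N1,
        Real.log ((S / N1) * c2 k / (σ1 ^ 2 * (S / N1) + σ2 ^ 2 * c2 k)) :=
  stmt_11_general N1 N2 σ1 σ2 hσ2 S c2 hc2 c1 hc1 hsum
end

section
/- Let σ_1, σ_2 > 0, let a_{l,k} > 0 for 1 ≤ l ≤ N_1, 1 ≤ k ≤ N_2, and let č_{1,l} > 0, č_{2,k} > 0. Define I_2(P) = Σ_{k=1}^{N_2} Σ_{l=1}^{N_1} log_2( (σ_2² + P·a_{l,k}·č_{1,l})(σ_1² + P·a_{l,k}·č_{2,k}) / (σ_1²σ_2² + P·σ_1²·a_{l,k}·č_{1,l} + P·σ_2²·a_{l,k}·č_{2,k}) ) for P ≥ 0. Then I_2(0) = 0, the first derivative of I_2 at P = 0 equals 0, and the second derivative of I_2 at P = 0 equals I_2''(0) = (2/ln 2)·Σ_{k=1}^{N_2} Σ_{l=1}^{N_1} a_{l,k}² č_{1,l} č_{2,k}/(σ_1² σ_2²). -/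
open Filter Real

lemma aux_affine (α β P : ℝ) : HasDerivAt (fun x => α + x*β) β P := by
  simpa using ((hasDerivAt_id P).mul_const β).const_add α

lemma aux_log (α β P : ℝ) (h : 0 < α + P*β) :
    HasDerivAt (fun x => Real.log (α + x*β)) (β/(α+P*β)) P :=
  (aux_affine α β P).log h.ne'

lemma aux_div (α β c P : ℝ) (h : α + P*β ≠ 0) :
    HasDerivAt (fun x => c/(α+x*β)) (-(c*β)/(α+P*β)^2) P := by
  have h2 := (hasDerivAt_const P c).fun_div (aux_affine α β P) h
  refine h2.congr_deriv ?_
  ring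

lemma aux_evpos (α β : ℝ) (h : 0 < α) : ∀ᶠ P in nhds (0:ℝ), 0 < α + P*β := by
  have hc : ContinuousAt (fun P : ℝ => α + P*β) 0 := by fun_prop
  have ht : Filter.Tendsto (fun P : ℝ => α + P*β) (nhds 0) (nhds α) := by
    simpa using hc.tendsto
  exact ht.eventually (eventually_gt_nhds h)

/-- Taylor behaviour of the mutual information
`I_2(P) = Σ_k Σ_l log_2((σ_2²+P a_{l,k}č_{1,l})(σ_1²+P a_{l,k}č_{2,k}) /
 (σ_1²σ_2² + Pσ_1² a_{l,k}č_{1,l} + Pσ_2² a_{l,k}č_{2,k}))`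
at `P = 0`: `I_2(0) = 0`, `I_2'(0) = 0`, and
`I_2''(0) = (2/ln 2)·Σ_l Σ_k a_{l,k}² č_{1,l} č_{2,k}/(σ_1²σ_2²)`. -/
theorem stmt_13 (N1 N2 : ℕ) (σ1 σ2 : ℝ) (hσ1 : 0 < σ1) (hσ2 : 0 < σ2)
    (a : Fin N1 → Fin N2 → ℝ) (ha : ∀ l k, 0 < a l k)
    (c1 : Fin N1 → ℝ) (hc1 : ∀ l, 0 < c1 l)
    (c2 : Fin N2 → ℝ) (hc2 : ∀ k, 0 < c2 k)
    (I2 : ℝ → ℝ)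
    (hI2 : ∀ P : ℝ, I2 P = ∑ k : Fin N2, ∑ l : Fin N1,
      Real.logb 2 ((σ2 ^ 2 + P * a l k * c1 l) * (σ1 ^ 2 + P * a l k * c2 k) /
        (σ1 ^ 2 * σ2 ^ 2 + P * σ1 ^ 2 * a l k * c1 l + P * σ2 ^ 2 * a l k * c2 k))) :
    I2 0 = 0 ∧ deriv I2 0 = 0 ∧
      deriv (deriv I2) 0 =
        (2 / Real.log 2) *
          ∑ l : Fin N1, ∑ k : Fin N2,
            (a l k) ^ 2 * c1 l * c2 k / (σ1 ^ 2 * σ2 ^ 2) := by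
  have hσ1' : (0:ℝ) < σ1^2 := by positivity
  have hσ2' : (0:ℝ) < σ2^2 := by positivity
  have hσ12 : (0:ℝ) < σ1^2*σ2^2 := by positivity
  -- abbreviations
  set b : Fin N1 → Fin N2 → ℝ := fun l k => a l k * c1 l with hbdef
  set d : Fin N1 → Fin N2 → ℝ := fun l k => a l k * c2 k with hddef
  set s : Fin N1 → Fin N2 → ℝ := fun l k => σ1^2*(b l k) + σ2^2*(d l k) with hsdef
  set F : ℝ → ℝ := fun P => (∑ k : Fin N2, ∑ l : Fin N1,
      (Real.log (σ2^2 + P*(b l k)) + Real.log (σ1^2 + P*(d l k))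
        - Real.log (σ1^2*σ2^2 + P*(s l k)))) / Real.log 2 with hFdef
  set F1 : ℝ → ℝ := fun P => (∑ k : Fin N2, ∑ l : Fin N1,
      ((b l k)/(σ2^2 + P*(b l k)) + (d l k)/(σ1^2 + P*(d l k))
        - (s l k)/(σ1^2*σ2^2 + P*(s l k)))) / Real.log 2 with hF1def
  -- positivity eventual set
  have hQ : ∀ᶠ P in nhds (0:ℝ), ∀ l k, 0 < σ2^2 + P*(b l k) ∧ 0 < σ1^2 + P*(d l k)
      ∧ 0 < σ1^2*σ2^2 + P*(s l k) := by
    rw [eventually_all]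
    intro l
    rw [eventually_all]
    intro k
    filter_upwards [aux_evpos (σ2^2) (b l k) hσ2', aux_evpos (σ1^2) (d l k) hσ1',
      aux_evpos (σ1^2*σ2^2) (s l k) hσ12] with P h1 h2 h3
    exact ⟨h1, h2, h3⟩
  have hQ0 : ∀ l k, 0 < σ2^2 + 0*(b l k) ∧ 0 < σ1^2 + 0*(d l k)
      ∧ 0 < σ1^2*σ2^2 + 0*(s l k) := by
    intro l k; refine ⟨by simpa using hσ2', by simpa using hσ1', by simpa using hσ12⟩
  -- I2 = F eventually
  have heq : I2 =ᶠ[nhds (0:ℝ)] F := by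
    filter_upwards [hQ] with P hP
    rw [hI2, hFdef]
    simp only [Finset.sum_div]
    refine Finset.sum_congr rfl fun k _ => Finset.sum_congr rfl fun l _ => ?_
    obtain ⟨h1, h2, h3⟩ := hP l k
    rw [show σ2^2 + P*a l k*c1 l = σ2^2 + P*(b l k) by rw [hbdef]; ring,
      show σ1^2 + P*a l k*c2 k = σ1^2 + P*(d l k) by rw [hddef]; ring,
      show σ1^2*σ2^2 + P*σ1^2*a l k*c1 l + P*σ2^2*a l k*c2 k
          = σ1^2*σ2^2 + P*(s l k) by rw [hsdef, hbdef, hddef]; ring,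
      Real.logb, Real.log_div (by positivity) h3.ne', Real.log_mul h1.ne' h2.ne']
  -- derivative of F on the good set
  have hF1 : ∀ P : ℝ, (∀ l k, 0 < σ2^2 + P*(b l k) ∧ 0 < σ1^2 + P*(d l k)
      ∧ 0 < σ1^2*σ2^2 + P*(s l k)) → HasDerivAt F (F1 P) P := by
    intro P hP
    rw [hFdef, hF1def]
    refine HasDerivAt.div_const (HasDerivAt.fun_sum fun k _ => HasDerivAt.fun_sum fun l _ => ?_) _
    obtain ⟨h1, h2, h3⟩ := hP l k
    exact ((aux_log _ _ _ h1).add (aux_log _ _ _ h2)).sub (aux_log _ _ _ h3)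
  have hderivF : deriv F =ᶠ[nhds (0:ℝ)] F1 := by
    filter_upwards [hQ] with P hP
    exact (hF1 P hP).deriv
  -- part 1
  have part1 : I2 0 = 0 := by
    rw [hI2]
    refine Finset.sum_eq_zero fun k _ => Finset.sum_eq_zero fun l _ => ?_
    rw [show (σ2^2 + 0*a l k*c1 l) * (σ1^2 + 0*a l k*c2 k) /
        (σ1^2*σ2^2 + 0*σ1^2*a l k*c1 l + 0*σ2^2*a l k*c2 k) = 1 by
      rw [show σ2^2 + 0*a l k*c1 l = σ2^2 by ring,
        show σ1^2 + 0*a l k*c2 k = σ1^2 by ring,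
        show σ1^2*σ2^2 + 0*σ1^2*a l k*c1 l + 0*σ2^2*a l k*c2 k = σ1^2*σ2^2 by ring]
      field_simp]
    exact Real.logb_one
  -- part 2
  have hF10 : F1 0 = 0 := by
    rw [hF1def]
    simp only [zero_mul, add_zero]
    rw [show (∑ k : Fin N2, ∑ l : Fin N1,
        ((b l k)/(σ2^2) + (d l k)/(σ1^2) - (s l k)/(σ1^2*σ2^2))) = 0 from
      Finset.sum_eq_zero fun k _ => Finset.sum_eq_zero fun l _ => by
        rw [hsdef]; field_simp; ring]
    simp
  have part2 : deriv I2 0 = 0 := by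
    rw [heq.deriv_eq, (hF1 0 hQ0).deriv]
    simpa using hF10
  -- part 3
  have hD2 : HasDerivAt F1 ((∑ k : Fin N2, ∑ l : Fin N1,
      ((-(b l k * b l k)/(σ2^2 + 0*(b l k))^2 + -(d l k * d l k)/(σ1^2 + 0*(d l k))^2)
        - -(s l k * s l k)/(σ1^2*σ2^2 + 0*(s l k))^2)) / Real.log 2) 0 := by
    rw [hF1def]
    refine HasDerivAt.div_const (HasDerivAt.fun_sum fun k _ => HasDerivAt.fun_sum fun l _ => ?_) _
    obtain ⟨h1, h2, h3⟩ := hQ0 l k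
    exact ((aux_div _ _ _ _ h1.ne').add (aux_div _ _ _ _ h2.ne')).sub (aux_div _ _ _ _ h3.ne')
  have part3 : deriv (deriv I2) 0 = (2 / Real.log 2) *
      ∑ l : Fin N1, ∑ k : Fin N2, (a l k)^2 * c1 l * c2 k / (σ1^2*σ2^2) := by
    rw [heq.deriv.deriv_eq, hderivF.deriv_eq, hD2.deriv]
    rw [Finset.sum_comm]
    rw [show (∑ l : Fin N1, ∑ k : Fin N2,
        ((-(b l k * b l k)/(σ2^2 + 0*(b l k))^2 + -(d l k * d l k)/(σ1^2 + 0*(d l k))^2)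
          - -(s l k * s l k)/(σ1^2*σ2^2 + 0*(s l k))^2))
        = ∑ l : Fin N1, ∑ k : Fin N2, 2 * ((a l k)^2 * c1 l * c2 k / (σ1^2*σ2^2)) from
      Finset.sum_congr rfl fun l _ => Finset.sum_congr rfl fun k _ => by
        rw [hsdef, hbdef, hddef]
        simp only [zero_mul, add_zero]
        field_simp
        ring]
    simp only [← Finset.mul_sum]
    ring
  exact ⟨part1, part2, part3⟩
end

section
/- (Eve cannot consistently estimate her CSI under ANECE.) Let A ∈ ℂ^{N_T×K} have rank r < N_T, with thin singular value decomposition A = Ǔ Λ̌ V̌^H where Ǔ ∈ ℂ^{N_T×r} satisfies Ǔ^H Ǔ = I_r, Λ̌ ∈ ℝ^{r×r} is diagonal with positive entries, and V̌ ∈ ℂ^{K×r} satisfies V̌^H V̌ = I_r. Let Ǔ_n ∈ ℂ^{N_T×(N_T−r)} satisfy Ǔ_n^H Ǔ_n = I and Ǔ_n^H Ǔ = 0. Define Φ = A (A^H A + I_K)^{−1} A^H. Then for any matrix S ∈ ℂ^{N×N_T}: Tr( S (I_{N_T} − Φ) S^H ) = Tr( S Ǔ (I_r + Λ̌²)^{−1}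 Ǔ^H S^H ) + Tr( S Ǔ_n Ǔ_n^H S^H ). In particular, Tr( S (I_{N_T} − Φ) S^H ) ≥ Tr( S Ǔ_n Ǔ_n^H S^H ), a quantity independent of Λ̌ (hence independent of the transmit power), so if S Ǔ_n ≠ 0 the error does not vanish as the singular values of A grow. -/
open Matrix ComplexOrder

/-!
By the Woodbury identity, `1 - A (AᴴA + 1)⁻¹ Aᴴ = (1 + AAᴴ)⁻¹`, and `AAᴴ = Ǔ Λ̌² Ǔᴴ`. Since
`[Ǔ Ǔ_n]` is unitary, `(1 + Ǔ X Ǔᴴ)⁻¹ = Ǔ (1 + X)⁻¹ Ǔᴴ + Ǔ_n Ǔ_nᴴ` whenever `1 + X` is invertible,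
which gives the decomposition; the first trace is nonnegative because
`(SǓ) (1 + Λ̌²)⁻¹ (SǓ)ᴴ` is positive semidefinite.
-/

namespace Matrix

section Complement

variable {R : Type*} [CommRing R] [StarRing R] {m k l : Type*} [Fintype m] [Fintype k]
  [Fintype l] [DecidableEq m] [DecidableEq k] [DecidableEq l]

theorem mul_conjTranspose_add_mul_conjTranspose_eq_one (U : Matrix m k R) (W : Matrix m l R)
    (hU : Uᴴ * U = 1) (hW : Wᴴ * W = 1) (hWU : Wᴴ * U = 0)
    (hcard : Fintype.card k + Fintype.card l = Fintype.card m) :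
    U * Uᴴ + W * Wᴴ = 1 := by
  have e : m ≃ k ⊕ l := Fintype.equivOfCardEq (by rw [Fintype.card_sum, hcard])
  have hUW : Uᴴ * W = 0 := by simpa using congrArg conjTranspose hWU
  have h : fromRows Uᴴ Wᴴ * fromCols U W = 1 := by
    rw [fromRows_mul_fromCols, hU, hW, hUW, hWU, fromBlocks_one]
  rw [← fromCols_mul_fromRows]
  exact (fromCols_mul_fromRows_eq_one_comm e U W Uᴴ Wᴴ).mpr h

end Complement

section Resolvent

variable {𝕜 : Type*} [RCLike 𝕜] {m n k l : Type*} [Fintype m] [Fintype n] [Fintype k]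
  [Fintype l] [DecidableEq m] [DecidableEq k]

theorem posDef_one_add_mul_conjTranspose (A : Matrix m n 𝕜) : (1 + A * Aᴴ).PosDef :=
  PosDef.one.add_posSemidef (posSemidef_self_mul_conjTranspose A)

theorem one_sub_mul_inv_mul_conjTranspose [DecidableEq n] (A : Matrix m n 𝕜) :
    1 - A * (Aᴴ * A + 1)⁻¹ * Aᴴ = (1 + A * Aᴴ)⁻¹ := by
  have hAA : IsUnit (1 + Aᴴ * A) := by
    simpa using (posDef_one_add_mul_conjTranspose Aᴴ).isUnit
  have hWoodbury := add_mul_mul_inv_eq_sub (1 : Matrix m m 𝕜) A 1 Aᴴ isUnit_one isUnit_one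
    (by simpa using hAA)
  simp only [inv_one, Matrix.mul_one, Matrix.one_mul] at hWoodbury
  rw [hWoodbury, add_comm]

theorem inv_one_add_mul_mul_conjTranspose (U : Matrix m k 𝕜) (W : Matrix m l 𝕜)
    (hU : Uᴴ * U = 1) (hWU : Wᴴ * U = 0) (hcomp : U * Uᴴ + W * Wᴴ = 1) (X : Matrix k k 𝕜)
    (hX : IsUnit (1 + X)) :
    (1 + U * X * Uᴴ)⁻¹ = U * (1 + X)⁻¹ * Uᴴ + W * Wᴴ := by
  have hUW : Uᴴ * W = 0 := by simpa using congrArg conjTranspose hWU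
  have hU' : (1 + U * X * Uᴴ) * U = U * (1 + X) := by
    rw [Matrix.add_mul, Matrix.one_mul, Matrix.mul_assoc, hU, Matrix.mul_one, Matrix.mul_add,
      Matrix.mul_one]
  have hW' : (1 + U * X * Uᴴ) * W = W := by
    rw [Matrix.add_mul, Matrix.one_mul, Matrix.mul_assoc, hUW, Matrix.mul_zero, add_zero]
  refine inv_eq_right_inv ?_
  calc (1 + U * X * Uᴴ) * (U * (1 + X)⁻¹ * Uᴴ + W * Wᴴ)
      = (1 + U * X * Uᴴ) * U * (1 + X)⁻¹ * Uᴴ + (1 + U * X * Uᴴ) * W * Wᴴ := by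
        simp only [Matrix.mul_add, Matrix.mul_assoc]
    _ = U * Uᴴ + W * Wᴴ := by
        rw [hU', hW', Matrix.mul_assoc U, mul_nonsing_inv _ ((1 + X).isUnit_iff_isUnit_det.mp hX),
          Matrix.mul_one]
    _ = 1 := hcomp

end Resolvent

end Matrix

theorem stmt_14_general (NT K N r : ℕ) (hr : r < NT)
    (A : Matrix (Fin NT) (Fin K) ℂ)
    (U : Matrix (Fin NT) (Fin r) ℂ) (hU : Uᴴ * U = 1)
    (lam : Fin r → ℝ)
    (V : Matrix (Fin K) (Fin r) ℂ) (hV : Vᴴ * V = 1)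
    (hA : A = U * Matrix.diagonal (fun i => (lam i : ℂ)) * Vᴴ)
    (Un : Matrix (Fin NT) (Fin (NT - r)) ℂ)
    (hUn : Unᴴ * Un = 1) (hUnU : Unᴴ * U = 0)
    (Φ : Matrix (Fin NT) (Fin NT) ℂ)
    (hΦ : Φ = A * (Aᴴ * A + 1)⁻¹ * Aᴴ)
    (S : Matrix (Fin N) (Fin NT) ℂ) :
    (S * ((1 : Matrix (Fin NT) (Fin NT) ℂ) - Φ) * Sᴴ).trace =
        (S * U *
            ((1 : Matrix (Fin r) (Fin r) ℂ) +
              Matrix.diagonal (fun i => ((lam i) ^ 2 : ℂ)))⁻¹ * Uᴴ * Sᴴ).trace +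
          (S * Un * Unᴴ * Sᴴ).trace ∧
      (S * Un * Unᴴ * Sᴴ).trace ≤
        (S * ((1 : Matrix (Fin NT) (Fin NT) ℂ) - Φ) * Sᴴ).trace := by
  set D : Matrix (Fin r) (Fin r) ℂ := diagonal fun i => (lam i : ℂ)
  have hDD : D * Dᴴ = diagonal fun i => ((lam i) ^ 2 : ℂ) := by
    rw [diagonal_conjTranspose, diagonal_mul_diagonal]
    simp [sq]
  have hAA : A * Aᴴ = U * (D * Dᴴ) * Uᴴ := by
    rw [hA]
    simp only [conjTranspose_mul, conjTranspose_conjTranspose, Matrix.mul_assoc]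
    rw [← Matrix.mul_assoc Vᴴ, hV, Matrix.one_mul]
  have hcomp : U * Uᴴ + Un * Unᴴ = 1 :=
    mul_conjTranspose_add_mul_conjTranspose_eq_one U Un hU hUn hUnU (by simp only [Fintype.card_fin]; omega)
  have hG := posDef_one_add_mul_conjTranspose D
  have hsplit : 1 - Φ = U * (1 + D * Dᴴ)⁻¹ * Uᴴ + Un * Unᴴ := by
    rw [hΦ, one_sub_mul_inv_mul_conjTranspose, hAA,
      inv_one_add_mul_mul_conjTranspose U Un hU hUnU hcomp _ hG.isUnit]
  have htrace : (S * (1 - Φ) * Sᴴ).trace =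
      (S * U * (1 + D * Dᴴ)⁻¹ * Uᴴ * Sᴴ).trace + (S * Un * Unᴴ * Sᴴ).trace := by
    rw [hsplit, Matrix.mul_add, Matrix.add_mul, trace_add]
    simp only [Matrix.mul_assoc]
  have hnonneg : 0 ≤ (S * U * (1 + D * Dᴴ)⁻¹ * Uᴴ * Sᴴ).trace := by
    simpa only [conjTranspose_mul, Matrix.mul_assoc] using
      (hG.inv.posSemidef.mul_mul_conjTranspose_same (S * U)).trace_nonneg
  rw [htrace, ← hDD]
  exact ⟨rfl, le_add_of_nonneg_left hnonneg⟩

/-- Eve cannot consistently estimate her CSI under ANECE: with the thin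
SVD `A = Ǔ Λ̌ V̌ᴴ` of a rank-`r` matrix (`r < N_T`), `Ǔ_n` an orthonormal basis of the
orthogonal complement of the column space, and `Φ = A(AᴴA + I)⁻¹Aᴴ`, for any
`S ∈ ℂ^{N×N_T}` one has
`Tr(S(I−Φ)Sᴴ) = Tr(SǓ(I+Λ̌²)⁻¹ǓᴴSᴴ) + Tr(SǓ_nǓ_nᴴSᴴ)`, and in particular
`Tr(SǓ_nǓ_nᴴSᴴ) ≤ Tr(S(I−Φ)Sᴴ)` (in the partial order of `ℂ`). -/
theorem stmt_14 (NT K N r : ℕ) (hr : r < NT)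
    (A : Matrix (Fin NT) (Fin K) ℂ)
    (U : Matrix (Fin NT) (Fin r) ℂ) (hU : Uᴴ * U = 1)
    (lam : Fin r → ℝ) (hlam : ∀ i, 0 < lam i)
    (V : Matrix (Fin K) (Fin r) ℂ) (hV : Vᴴ * V = 1)
    (hA : A = U * Matrix.diagonal (fun i => (lam i : ℂ)) * Vᴴ)
    (Un : Matrix (Fin NT) (Fin (NT - r)) ℂ)
    (hUn : Unᴴ * Un = 1) (hUnU : Unᴴ * U = 0)
    (Φ : Matrix (Fin NT) (Fin NT) ℂ)
    (hΦ : Φ = A * (Aᴴ * A + 1)⁻¹ * Aᴴ)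
    (S : Matrix (Fin N) (Fin NT) ℂ) :
    (S * ((1 : Matrix (Fin NT) (Fin NT) ℂ) - Φ) * Sᴴ).trace =
        (S * U *
            ((1 : Matrix (Fin r) (Fin r) ℂ) +
              Matrix.diagonal (fun i => ((lam i) ^ 2 : ℂ)))⁻¹ * Uᴴ * Sᴴ).trace +
          (S * Un * Unᴴ * Sᴴ).trace ∧
      (S * Un * Unᴴ * Sᴴ).trace ≤
        (S * ((1 : Matrix (Fin NT) (Fin NT) ℂ) - Φ) * Sᴴ).trace :=
  stmt_14_general NT K N r hr A U hU lam V hV hA Un hUn hUnU Φ hΦ S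
end
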